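/- arXiv:1001.4216 — 7 statements merged into one kernel-verified Lean document; each statement's English description precedes it below -/
import Mathlib

section
/- For a closure operator S ↦ S̄ on the power set of a finite set E with lattice of closed sets F and Möbius function μ, if the empty set is closed then for each closed set A, μ(∅, A) = ∑_{S ⊆ E, S̄ = A} (-1)^{|S|}; if the empty set is not closed then ∑_{S ⊆ E, S̄ = A} (-1)^{|S|} = 0 for every closed set A. -/
/-!
Summing `(-1)^{|S|}` over all `S ⊆ B` gives `[B = ∅]`; grouping the `S` by their closure, which
is a closed subset of `B` when `B` is closed, shows that `A ↦ ∑_{S̄ = A} (-1)^{|S|}` satisfies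
the defining recursion of `μ(∅, ·)` on the closed sets. That recursion is triangular, so it has
at most one solution. If `∅` is not closed then no closed `B` is empty, so the same function has
all its lower sums zero and hence vanishes.
-/

open Finset

theorem Finset.eq_of_sum_powerset_filter_eq {α M : Type*} [DecidableEq α] [AddCommGroup M]
    (p : Finset α → Prop) [DecidablePred p] {g h : Finset α → M}
    (hgh : ∀ B, p B → ∑ A ∈ B.powerset.filter p, g A = ∑ A ∈ B.powerset.filter p, h A) :
    ∀ B, p B → g B = h B := by
  intro B
  induction B using Finset.strongInduction with
  | _ B ih =>
    intro hB
    have hBmem : B ∈ B.powerset.filter p := mem_filter.2 ⟨mem_powerset_self B, hB⟩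
    have hlower : ∑ A ∈ (B.powerset.filter p).erase B, g A =
        ∑ A ∈ (B.powerset.filter p).erase B, h A := by
      refine sum_congr rfl fun A hA => ?_
      rw [mem_erase, mem_filter, mem_powerset] at hA
      exact ih A (ssubset_of_subset_of_ne hA.2.1 hA.1) hA.2.2
    have key := hgh B hB
    rwa [← add_sum_erase _ g hBmem, ← add_sum_erase _ h hBmem, hlower, add_left_inj] at key

section ClosureFibers

variable {E : Type*} [Fintype E] [DecidableEq E] {cl : Finset E → Finset E}

theorem sum_closed_subsets_sum_fiber {M : Type*} [AddCommMonoid M]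
    (hext : ∀ S, S ⊆ cl S) (hmono : ∀ S T, S ⊆ T → cl S ⊆ cl T) (hidem : ∀ S, cl (cl S) = cl S)
    (f : Finset E → M) {B : Finset E} (hB : cl B = B) :
    ∑ A ∈ B.powerset.filter (fun A => cl A = A), ∑ S ∈ univ.powerset.filter (fun S => cl S = A), f S
      = ∑ S ∈ B.powerset, f S := by
  have hfiber : ∀ A ∈ B.powerset.filter (fun A => cl A = A),
      univ.powerset.filter (fun S => cl S = A) = B.powerset.filter (fun S => cl S = A) := by
    intro A hA
    ext S
    simp only [mem_filter, mem_powerset, subset_univ, true_and]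
    exact ⟨fun hS => ⟨(hext S).trans (hS ▸ mem_powerset.1 (mem_filter.1 hA).1), hS⟩, And.right⟩
  have hmaps : ∀ S ∈ B.powerset, cl S ∈ B.powerset.filter (fun A => cl A = A) := fun S hS =>
    mem_filter.2 ⟨mem_powerset.2 (hB ▸ hmono S B (mem_powerset.1 hS)), hidem S⟩
  rw [sum_congr rfl fun A hA => by rw [hfiber A hA], sum_fiberwise_of_maps_to hmaps]

theorem sum_closed_subsets_sum_fiber_neg_one_pow
    (hext : ∀ S, S ⊆ cl S) (hmono : ∀ S T, S ⊆ T → cl S ⊆ cl T) (hidem : ∀ S, cl (cl S) = cl S)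
    {B : Finset E} (hB : cl B = B) :
    ∑ A ∈ B.powerset.filter (fun A => cl A = A),
      ∑ S ∈ univ.powerset.filter (fun S => cl S = A), (-1 : ℤ) ^ S.card
      = if B = ∅ then 1 else 0 := by
  rw [sum_closed_subsets_sum_fiber hext hmono hidem _ hB, sum_powerset_neg_one_pow_card]

end ClosureFibers

open Finset in
/-- Möbius-function identity for a closure operator on the power set of a finite set `E`:
if `∅` is closed then `μ(∅, A) = ∑_{S̄ = A} (−1)^{|S|}` for every closed `A`; if `∅` is not
closed then `∑_{S̄ = A} (−1)^{|S|} = 0` for every closed `A`.  Here `μ` is the Möbius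
function of the lattice of closed sets, characterized by its defining recursion. -/
theorem stmt_0 {E : Type*} [Fintype E] [DecidableEq E]
    (cl : Finset E → Finset E)
    (hext : ∀ S, S ⊆ cl S)
    (hmono : ∀ S T, S ⊆ T → cl S ⊆ cl T)
    (hidem : ∀ S, cl (cl S) = cl S)
    (μ : Finset E → Finset E → ℤ)
    (hμ : ∀ A B, cl A = A → cl B = B → A ⊆ B →
      (∑ C ∈ B.powerset.filter (fun C => cl C = C ∧ A ⊆ C), μ A C) =
        if A = B then 1 else 0) :
    (cl ∅ = ∅ → ∀ A, cl A = A →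
      μ ∅ A = ∑ S ∈ univ.powerset.filter (fun S => cl S = A), (-1 : ℤ) ^ S.card) ∧
    (cl ∅ ≠ ∅ → ∀ A, cl A = A →
      (∑ S ∈ univ.powerset.filter (fun S => cl S = A), (-1 : ℤ) ^ S.card) = 0) := by
  constructor
  · intro h0
    refine eq_of_sum_powerset_filter_eq (fun C => cl C = C) fun B hB => ?_
    have hrec := hμ ∅ B h0 hB (empty_subset B)
    simp only [empty_subset, and_true] at hrec
    rw [hrec, sum_closed_subsets_sum_fiber_neg_one_pow hext hmono hidem hB]
    simp only [eq_comm]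
  · intro h0
    refine eq_of_sum_powerset_filter_eq (fun C => cl C = C) (h := fun _ => 0) fun B hB => ?_
    have hBne : B ≠ ∅ := fun hBe => h0 (hBe ▸ hB)
    rw [sum_closed_subsets_sum_fiber_neg_one_pow hext hmono hidem hB, if_neg hBne, sum_const_zero]
end

section
/- The total chromatic polynomial of a gain graph Φ, defined by χ̃_Φ(q,z) = ∑_{S ⊆ E} (−1)^{|S|} q^{b(S)} z^{c(S)−b(S)}, satisfies the deletion-contraction identity χ̃_Φ(q,z) = χ̃_{Φ∖e}(q,z) − χ̃_{Φ/e}(q,z) for every link e. -/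
/-- A finite gain graph with gain group `𝔊`: each edge is given with a chosen orientation
`src e → tgt e` and its gain in that orientation (its gain in the reverse orientation
being the inverse). -/
structure GG (𝔊 : Type) [Group 𝔊] : Type 1 where
  V : Type
  E : Type
  fV : Fintype V
  fE : Fintype E
  src : E → V
  tgt : E → V
  gain : E → 𝔊

attribute [instance] GG.fV GG.fE

variable {𝔊 : Type} [Group 𝔊]

/-- Switching a gain graph by a switching function `η`. -/
def GG.switch (Φ : GG 𝔊) (η : Φ.V → 𝔊) : GG 𝔊 :=
  { Φ with gain := fun e => (η (Φ.src e))⁻¹ * Φ.gain e * η (Φ.tgt e) }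

open Classical in
/-- Contract the edges of `S` (identifying the endpoints of each edge of `S`) and delete
the edges of `D`, keeping the gains of the remaining edges.  `Φ.contractDel ∅ D` is
deletion of `D`, and `Φ.contractDel {e} {e}` is contraction `Φ/e` of a neutral edge `e`. -/
noncomputable def GG.contractDel (Φ : GG 𝔊) (S D : Finset Φ.E) : GG 𝔊 where
  V := Quot (fun x y : Φ.V => ∃ e ∈ S, x = Φ.src e ∧ y = Φ.tgt e)
  E := {e' : Φ.E // e' ∉ D}
  fV := @Fintype.ofSurjective _ _ (Classical.decEq _) _ (Quot.mk _)
      (fun q => Quot.exists_rep q)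
  fE := inferInstance
  src := fun e' => Quot.mk _ (Φ.src e'.1)
  tgt := fun e' => Quot.mk _ (Φ.tgt e'.1)
  gain := fun e' => Φ.gain e'.1

/-- The source of a directed edge (an edge together with a direction of traversal). -/
def GG.dsrc (Φ : GG 𝔊) (p : Φ.E × Bool) : Φ.V := if p.2 then Φ.src p.1 else Φ.tgt p.1

/-- The target of a directed edge. -/
def GG.dtgt (Φ : GG 𝔊) (p : Φ.E × Bool) : Φ.V := if p.2 then Φ.tgt p.1 else Φ.src p.1

/-- The gain of a directed edge. -/
def GG.dgain (Φ : GG 𝔊) (p : Φ.E × Bool) : 𝔊 := if p.2 then Φ.gain p.1 else (Φ.gain p.1)⁻¹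

/-- `w` is a circle of the edge set `S`: a nonempty closed walk using edges of `S`, with
no repeated edges and no repeated vertices. -/
structure GG.IsCircle (Φ : GG 𝔊) (S : Finset Φ.E) (w : List (Φ.E × Bool)) : Prop where
  ne : w ≠ []
  mem : ∀ p ∈ w, p.1 ∈ S
  chain : w.Chain' fun p q => Φ.dtgt p = Φ.dsrc q
  closed : ∀ h : w ≠ [], Φ.dtgt (w.getLast h) = Φ.dsrc (w.head h)
  edgesNodup : (w.map Prod.fst).Nodup
  vertsNodup : (w.map Φ.dsrc).Nodup

/-- The simple graph on the vertices of `Φ` whose adjacency is given by the edges in `S`. -/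
def GG.compGraph (Φ : GG 𝔊) (S : Finset Φ.E) : SimpleGraph Φ.V :=
  SimpleGraph.fromRel fun a b => ∃ e ∈ S, Φ.src e = a ∧ Φ.tgt e = b

/-- `c(S)`: the number of connected components of the spanning subgraph `(V, S)`. -/
noncomputable def GG.c (Φ : GG 𝔊) (S : Finset Φ.E) : ℕ :=
  Nat.card (Φ.compGraph S).ConnectedComponent

/-- A component of `(V, S)` is balanced if every circle of `S` lying in it has gain equal
to the identity. -/
def GG.BalancedComp (Φ : GG 𝔊) (S : Finset Φ.E) (C : (Φ.compGraph S).ConnectedComponent) :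
    Prop :=
  ∀ w, Φ.IsCircle S w → ∀ h : w ≠ [],
    (Φ.compGraph S).connectedComponentMk (Φ.dsrc (w.head h)) = C →
      (w.map Φ.dgain).prod = 1

/-- `b(S)`: the number of balanced components of `(V, S)`. -/
noncomputable def GG.b (Φ : GG 𝔊) (S : Finset Φ.E) : ℕ :=
  Nat.card {C : (Φ.compGraph S).ConnectedComponent // Φ.BalancedComp S C}

/-- The total chromatic polynomial `χ̃_Φ(q,z) = ∑_{S ⊆ E} (−1)^{|S|} q^{b(S)} z^{c(S)−b(S)}`. -/
noncomputable def GG.chiTotal (Φ : GG 𝔊) (q z : ℤ) : ℤ :=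
  ∑ S : Finset Φ.E, (-1) ^ S.card * q ^ Φ.b S * z ^ (Φ.c S - Φ.b S)

open Classical in
/-- Contraction of a link: first switch so that the link is neutral, then contract it. -/
noncomputable def GG.contractLink (Φ : GG 𝔊) (e : Φ.E) : GG 𝔊 :=
  (Φ.switch fun v => if v = Φ.tgt e then (Φ.gain e)⁻¹ else 1).contractDel {e} {e}

/-!
Balance can be tested on closed walks instead of circles: a closed walk that repeats a
vertex splits into two shorter closed walks, and one that repeats an edge without repeating a
vertex traverses it back and forth around a shorter closed walk, so by induction on the length
every closed walk of a component is a product of circles up to cancellation. Hence `c(S)` and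
`b(S)` only depend on the sets of gains of the walks in `S` between any two vertices. Switching
conjugates these sets; deleting an edge outside `S`, or contracting a neutral edge of `S`,
leaves them unchanged, because a walk of `Φ / e` lifts to `Φ` by inserting copies of `e`,
whose gain is `1`. Splitting the defining sum of `χ̃_Φ` according to whether `e ∈ S` then
gives the identity, the sign coming from `|S| = |S ∖ e| + 1`.
-/

theorem List.exists_eq_append_cons_append_cons_of_not_nodup_map {α β : Type*} {f : α → β}
    {l : List α} (h : ¬(l.map f).Nodup) :
    ∃ l₁ a l₂ b l₃, l = l₁ ++ a :: (l₂ ++ b :: l₃) ∧ f a = f b := by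
  obtain ⟨x, hx⟩ := not_forall_not.1 (mt List.nodup_iff_sublist.2 h)
  obtain ⟨l', hl', hmap⟩ := List.sublist_map_iff.1 hx
  rcases l' with _ | ⟨a, _ | ⟨b, _ | ⟨c, l'⟩⟩⟩ <;> simp only [List.map_cons, List.map_nil,
    List.cons.injEq, reduceCtorEq, and_false, and_true] at hmap
  obtain ⟨r₁, r₂, rfl, ha, hb⟩ := List.cons_sublist_iff.1 hl'
  obtain ⟨l₁, l₂, rfl⟩ := List.append_of_mem ha
  obtain ⟨m₁, l₃, rfl⟩ := List.append_of_mem (List.singleton_sublist.1 hb)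
  exact ⟨l₁, a, l₂ ++ m₁, b, l₃, by simp, hmap.1.symm.trans hmap.2⟩

theorem Finset.sum_univ_finset_eq_add {α M : Type*} [Fintype α] [DecidableEq α]
    [AddCommMonoid M] (a : α) (f : Finset α → M) :
    ∑ s, f s = ∑ t : Finset {x // x ∉ ({a} : Finset α)}, f (t.map (.subtype _)) +
      ∑ t : Finset {x // x ∉ ({a} : Finset α)}, f (insert a (t.map (.subtype _))) := by
  have hsub : ∀ g : Finset α → M, ∑ s ∈ (univ.erase a).powerset, g s =
      ∑ t : Finset {x // x ∉ ({a} : Finset α)}, g (t.map (.subtype _)) := fun g => by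
    rw [Finset.sum_subtype _ (p := fun s => ∀ x ∈ s, x ∉ ({a} : Finset α))
      (by simp [Finset.subset_iff])]
    exact (Fintype.sum_equiv (Equiv.finsetSubtypeComm _) _ _ fun _ => rfl).symm
  rw [← hsub, ← hsub (fun s => f (insert a s)), ← Finset.sum_powerset_insert
    (Finset.notMem_erase a univ), Finset.insert_erase (Finset.mem_univ a), Finset.powerset_univ]

namespace SimpleGraph

variable {V W : Type*} {G : SimpleGraph V} {H : SimpleGraph W}

noncomputable def ConnectedComponent.equivOfReachableIff (f : V → W) (hf : f.Surjective)
    (h : ∀ u v, H.Reachable (f u) (f v) ↔ G.Reachable u v) :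
    G.ConnectedComponent ≃ H.ConnectedComponent :=
  Equiv.ofBijective
    (ConnectedComponent.lift (fun v => H.connectedComponentMk (f v))
      fun u v p _ => ConnectedComponent.sound ((h u v).2 p.reachable))
    ⟨fun C D => C.ind fun u => D.ind fun v huv =>
        ConnectedComponent.sound ((h u v).1 (ConnectedComponent.exact huv)),
      fun D => D.ind fun w => (hf w).elim fun v hv => ⟨G.connectedComponentMk v, by simp [hv]⟩⟩

end SimpleGraph

namespace GG

def IsWalk (Φ : GG 𝔊) (S : Finset Φ.E) : Φ.V → List (Φ.E × Bool) → Φ.V → Prop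
  | u, [], v => u = v
  | u, p :: w, v => p.1 ∈ S ∧ Φ.dsrc p = u ∧ Φ.IsWalk S (Φ.dtgt p) w v

def walkGains (Φ : GG 𝔊) (S : Finset Φ.E) (u v : Φ.V) : Set 𝔊 :=
  {g | ∃ w, Φ.IsWalk S u w v ∧ (w.map Φ.dgain).prod = g}

variable {Φ : GG 𝔊} {S : Finset Φ.E} {u v : Φ.V} {w : List (Φ.E × Bool)}

@[simp]
theorem isWalk_nil : Φ.IsWalk S u [] v ↔ u = v := Iff.rfl

@[simp]
theorem isWalk_cons {p : Φ.E × Bool} :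
    Φ.IsWalk S u (p :: w) v ↔ p.1 ∈ S ∧ Φ.dsrc p = u ∧ Φ.IsWalk S (Φ.dtgt p) w v :=
  Iff.rfl

theorem isWalk_append {w₁ w₂ : List (Φ.E × Bool)} :
    Φ.IsWalk S u (w₁ ++ w₂) v ↔ ∃ m, Φ.IsWalk S u w₁ m ∧ Φ.IsWalk S m w₂ v := by
  induction w₁ generalizing u with
  | nil => simp
  | cons p w₁ ih => simp [ih, and_assoc, exists_and_left]

theorem isWalk_iff_of_ne_nil (hw : w ≠ []) :
    Φ.IsWalk S u w v ↔ (∀ p ∈ w, p.1 ∈ S) ∧ w.IsChain (fun p q => Φ.dtgt p = Φ.dsrc q) ∧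
      Φ.dsrc (w.head hw) = u ∧ Φ.dtgt (w.getLast hw) = v := by
  induction w generalizing u with
  | nil => contradiction
  | cons p w ih =>
    rcases w with _ | ⟨q, w⟩
    · simp [eq_comm]
    · rw [isWalk_cons, ih (List.cons_ne_nil q w)]
      simp only [List.mem_cons, forall_eq_or_imp, List.isChain_cons_cons, List.head_cons,
        List.getLast_cons_cons]
      grind

theorem one_mem_walkGains (u : Φ.V) : (1 : 𝔊) ∈ Φ.walkGains S u u := ⟨[], rfl, rfl⟩

theorem dgain_mem_walkGains {p : Φ.E × Bool} (hp : p.1 ∈ S) :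
    Φ.dgain p ∈ Φ.walkGains S (Φ.dsrc p) (Φ.dtgt p) :=
  ⟨[p], ⟨hp, rfl, rfl⟩, by simp⟩

theorem mul_mem_walkGains {m : Φ.V} {g h : 𝔊} (hg : g ∈ Φ.walkGains S u m)
    (hh : h ∈ Φ.walkGains S m v) : g * h ∈ Φ.walkGains S u v := by
  obtain ⟨w₁, hw₁, rfl⟩ := hg
  obtain ⟨w₂, hw₂, rfl⟩ := hh
  exact ⟨w₁ ++ w₂, isWalk_append.2 ⟨m, hw₁, hw₂⟩, by simp⟩

theorem inv_mem_walkGains {g : 𝔊} (hg : g ∈ Φ.walkGains S u v) : g⁻¹ ∈ Φ.walkGains S v u := by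
  obtain ⟨w, hw, rfl⟩ := hg
  induction w generalizing u with
  | nil => simpa [show u = v from hw] using one_mem_walkGains v
  | cons p w ih =>
    obtain ⟨hp, rfl, hw⟩ := hw
    have hback : (Φ.dgain p)⁻¹ ∈ Φ.walkGains S (Φ.dtgt p) (Φ.dsrc p) := by
      obtain ⟨f, _ | _⟩ := p
      · simpa [dgain, dsrc, dtgt] using dgain_mem_walkGains (Φ := Φ) (S := S) (p := (f, true)) hp
      · simpa [dgain, dsrc, dtgt] using dgain_mem_walkGains (Φ := Φ) (S := S) (p := (f, false)) hp
    simpa using mul_mem_walkGains (ih hw) hback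

theorem reachable_src_tgt {f : Φ.E} (hf : f ∈ S) :
    (Φ.compGraph S).Reachable (Φ.src f) (Φ.tgt f) := by
  by_cases h : Φ.src f = Φ.tgt f
  · rw [h]
  · exact (SimpleGraph.fromRel_adj _ _ _ |>.2 ⟨h, .inl ⟨f, hf, rfl, rfl⟩⟩).reachable

theorem reachable_iff_nonempty_walkGains :
    (Φ.compGraph S).Reachable u v ↔ (Φ.walkGains S u v).Nonempty := by
  constructor
  · rintro ⟨p⟩
    induction p with
    | nil => exact ⟨1, one_mem_walkGains _⟩
    | cons hadj _ ih =>
      obtain ⟨g, hg⟩ := ih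
      obtain ⟨-, ⟨f, hf, rfl, rfl⟩ | ⟨f, hf, rfl, rfl⟩⟩ := (SimpleGraph.fromRel_adj _ _ _).1 hadj
      · exact ⟨_, mul_mem_walkGains (dgain_mem_walkGains (p := (f, true)) hf) hg⟩
      · exact ⟨_, mul_mem_walkGains (dgain_mem_walkGains (p := (f, false)) hf) hg⟩
  · rintro ⟨g, w, hw, -⟩
    induction w generalizing u with
    | nil => exact (show u = v from hw) ▸ .refl _
    | cons p w ih =>
      obtain ⟨hp, rfl, hw⟩ := hw
      refine .trans ?_ (ih hw)
      obtain ⟨f, _ | _⟩ := p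
      · exact (reachable_src_tgt hp).symm
      · exact reachable_src_tgt hp

theorem IsCircle.isWalk (hw : Φ.IsCircle S w) (hne : w ≠ []) :
    Φ.IsWalk S (Φ.dsrc (w.head hne)) w (Φ.dsrc (w.head hne)) :=
  (isWalk_iff_of_ne_nil hne).2 ⟨hw.mem, hw.chain, rfl, hw.closed hne⟩

theorem IsWalk.isCircle (hw : Φ.IsWalk S u w u) (hne : w ≠ []) (he : (w.map Prod.fst).Nodup)
    (hv : (w.map Φ.dsrc).Nodup) : Φ.IsCircle S w :=
  have ⟨hmem, hchain, hsrc, htgt⟩ := (isWalk_iff_of_ne_nil hne).1 hw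
  ⟨hne, hmem, hchain, fun _ => htgt.trans hsrc.symm, he, hv⟩

theorem IsWalk.split_of_dsrc_eq {l₁ l₂ l₃ : List (Φ.E × Bool)} {p q : Φ.E × Bool}
    (hw : Φ.IsWalk S u (l₁ ++ p :: (l₂ ++ q :: l₃)) v) (hpq : Φ.dsrc p = Φ.dsrc q) :
    Φ.IsWalk S u l₁ (Φ.dsrc p) ∧ Φ.IsWalk S (Φ.dsrc p) (p :: l₂) (Φ.dsrc p) ∧
      Φ.IsWalk S u (l₁ ++ q :: l₃) v := by
  simp only [isWalk_append, isWalk_cons] at hw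
  obtain ⟨_, h₁, hp, rfl, _, h₂, hq, rfl, h₃⟩ := hw
  exact ⟨h₁, ⟨hp, rfl, hpq ▸ h₂⟩, isWalk_append.2 ⟨_, h₁, hq, hpq.symm, h₃⟩⟩

theorem IsWalk.split_of_backtrack {l₁ l₂ l₃ : List (Φ.E × Bool)} {f : Φ.E} {b : Bool}
    (hw : Φ.IsWalk S u (l₁ ++ (f, b) :: (l₂ ++ (f, !b) :: l₃)) v) :
    Φ.IsWalk S u (l₁ ++ [(f, b)]) (Φ.dtgt (f, b)) ∧
      Φ.IsWalk S (Φ.dtgt (f, b)) l₂ (Φ.dtgt (f, b)) ∧ Φ.IsWalk S u (l₁ ++ l₃) v := by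
  simp only [isWalk_append, isWalk_cons] at hw
  obtain ⟨_, h₁, hp, rfl, _, h₂, -, rfl, h₃⟩ := hw
  have hsrc : Φ.dsrc (f, !b) = Φ.dtgt (f, b) := by cases b <;> rfl
  have htgt : Φ.dtgt (f, !b) = Φ.dsrc (f, b) := by cases b <;> rfl
  exact ⟨isWalk_append.2 ⟨_, h₁, hp, rfl, rfl⟩, hsrc ▸ h₂, isWalk_append.2 ⟨_, h₁, htgt ▸ h₃⟩⟩

theorem BalancedComp.prod_eq_one {C : (Φ.compGraph S).ConnectedComponent}
    (hC : Φ.BalancedComp S C) (hu : (Φ.compGraph S).connectedComponentMk u = C)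
    (hw : Φ.IsWalk S u w u) : (w.map Φ.dgain).prod = 1 := by
  induction hn : w.length using Nat.strong_induction_on generalizing u w with
  | _ n ih =>
  subst hn
  have hmk : ∀ {w₁ : List (Φ.E × Bool)} {m}, Φ.IsWalk S u w₁ m →
      (Φ.compGraph S).connectedComponentMk m = C := fun hw₁ =>
    hu ▸ (SimpleGraph.ConnectedComponent.sound
      (reachable_iff_nonempty_walkGains.2 ⟨_, _, hw₁, rfl⟩)).symm
  have hprod : ∀ {l₁ l₂ l₃ : List (Φ.E × Bool)} {p q : Φ.E × Bool},
      ((l₁ ++ p :: (l₂ ++ q :: l₃)).map Φ.dgain).prod = (l₁.map Φ.dgain).prod *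
        (Φ.dgain p * ((l₂.map Φ.dgain).prod * (Φ.dgain q * (l₃.map Φ.dgain).prod))) := by
    simp
  have cut_at_vertex : ∀ l₁ p l₂ q l₃, w = l₁ ++ p :: (l₂ ++ q :: l₃) →
      Φ.dsrc p = Φ.dsrc q → (w.map Φ.dgain).prod = 1 := by
    rintro l₁ p l₂ q l₃ rfl hpq
    obtain ⟨h₁, hloop, hrest⟩ := hw.split_of_dsrc_eq hpq
    have hloop := ih _ (by simp; omega) (hmk h₁) hloop rfl
    have hrest := ih _ (by simp) hu hrest rfl
    simp only [List.map_append, List.map_cons, List.prod_append, List.prod_cons] at hloop hrest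
    rw [hprod, ← mul_assoc (Φ.dgain p), hloop, one_mul, hrest]
  rcases eq_or_ne w [] with rfl | hne
  · rfl
  by_cases hv : (w.map Φ.dsrc).Nodup
  · by_cases he : (w.map Prod.fst).Nodup
    · exact hC w (hw.isCircle hne he hv) hne (((isWalk_iff_of_ne_nil hne).1 hw).2.2.1 ▸ hu)
    obtain ⟨l₁, ⟨f, b⟩, l₂, ⟨f', b'⟩, l₃, rfl, rfl : f = f'⟩ :=
      List.exists_eq_append_cons_append_cons_of_not_nodup_map he
    by_cases hb : b = b'
    · exact cut_at_vertex _ _ _ _ _ rfl (by rw [hb])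
    obtain rfl : b' = !b := by cases b <;> cases b' <;> simp_all
    obtain ⟨h₁, hloop, hrest⟩ := hw.split_of_backtrack
    have hloop := ih _ (by simp; omega) (hmk h₁) hloop rfl
    have hrest := ih _ (by simp; omega) hu hrest rfl
    have hinv : Φ.dgain (f, !b) = (Φ.dgain (f, b))⁻¹ := by cases b <;> simp [dgain]
    simp only [List.map_append, List.prod_append] at hrest
    rw [hprod, hloop, one_mul, hinv, mul_inv_cancel_left, hrest]
  · obtain ⟨l₁, p, l₂, q, l₃, hsplit, hpq⟩ :=
      List.exists_eq_append_cons_append_cons_of_not_nodup_map hv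
    exact cut_at_vertex l₁ p l₂ q l₃ hsplit hpq

theorem balancedComp_iff {C : (Φ.compGraph S).ConnectedComponent} :
    Φ.BalancedComp S C ↔
      ∀ v, (Φ.compGraph S).connectedComponentMk v = C → Φ.walkGains S v v ⊆ {1} :=
  ⟨fun hC _ hv _ ⟨_, hw, hg⟩ => hg ▸ hC.prod_eq_one hv hw,
    fun h w hw hne hC => h _ hC ⟨w, hw.isWalk hne, rfl⟩⟩

section Transfer

variable {Ψ : GG 𝔊} {S' : Finset Ψ.E}

noncomputable def componentEquiv (f : Φ.V → Ψ.V) (hf : f.Surjective)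
    (hreach : ∀ u v, (Ψ.walkGains S' (f u) (f v)).Nonempty ↔ (Φ.walkGains S u v).Nonempty) :
    (Φ.compGraph S).ConnectedComponent ≃ (Ψ.compGraph S').ConnectedComponent :=
  SimpleGraph.ConnectedComponent.equivOfReachableIff f hf fun u v => by
    rw [reachable_iff_nonempty_walkGains, reachable_iff_nonempty_walkGains, hreach]

theorem c_eq_of_walkGains (f : Φ.V → Ψ.V) (hf : f.Surjective)
    (hreach : ∀ u v, (Ψ.walkGains S' (f u) (f v)).Nonempty ↔ (Φ.walkGains S u v).Nonempty) :
    Ψ.c S' = Φ.c S :=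
  (Nat.card_congr (componentEquiv f hf hreach)).symm

theorem b_eq_of_walkGains (f : Φ.V → Ψ.V) (hf : f.Surjective)
    (hreach : ∀ u v, (Ψ.walkGains S' (f u) (f v)).Nonempty ↔ (Φ.walkGains S u v).Nonempty)
    (hbal : ∀ v, Ψ.walkGains S' (f v) (f v) ⊆ {1} ↔ Φ.walkGains S v v ⊆ {1}) :
    Ψ.b S' = Φ.b S := by
  refine (Nat.card_congr (Equiv.subtypeEquiv (componentEquiv f hf hreach) fun C => ?_)).symm
  have hmk : ∀ x, (Ψ.compGraph S').connectedComponentMk (f x) =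
      componentEquiv f hf hreach ((Φ.compGraph S).connectedComponentMk x) := fun _ => rfl
  simp only [balancedComp_iff, hf.forall, hbal, hmk, Equiv.apply_eq_iff_eq]

end Transfer

theorem isWalk_switch (η : Φ.V → 𝔊) : (Φ.switch η).IsWalk S u w v ↔ Φ.IsWalk S u w v := by
  induction w generalizing u with
  | nil => rfl
  | cons p w ih => exact and_congr_right' (and_congr_right' ih)

theorem prod_map_dgain_switch (η : Φ.V → 𝔊) (hw : Φ.IsWalk S u w v) :
    (w.map (Φ.switch η).dgain).prod = (η u)⁻¹ * (w.map Φ.dgain).prod * η v := by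
  induction w generalizing u with
  | nil =>
    subst hw
    show (1 : 𝔊) = (η u)⁻¹ * 1 * η u
    simp
  | cons p w ih =>
    obtain ⟨-, rfl, hw⟩ := hw
    change (Φ.switch η).dgain p * (w.map (Φ.switch η).dgain).prod = _
    rw [ih hw]
    obtain ⟨f, _ | _⟩ := p <;> simp [switch, dgain, dsrc, dtgt, mul_assoc]

theorem walkGains_switch (η : Φ.V → 𝔊) :
    (Φ.switch η).walkGains S u v = (fun g => (η u)⁻¹ * g * η v) '' Φ.walkGains S u v := by
  ext g
  constructor
  · rintro ⟨w, hw, rfl⟩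
    have hw := (isWalk_switch η).1 hw
    exact ⟨_, ⟨w, hw, rfl⟩, (prod_map_dgain_switch η hw).symm⟩
  · rintro ⟨_, ⟨w, hw, rfl⟩, rfl⟩
    exact ⟨w, (isWalk_switch η).2 hw, prod_map_dgain_switch η hw⟩

theorem c_switch (η : Φ.V → 𝔊) : (Φ.switch η).c S = Φ.c S := rfl

theorem b_switch (η : Φ.V → 𝔊) : (Φ.switch η).b S = Φ.b S :=
  b_eq_of_walkGains id Function.surjective_id (fun _ _ => by simp [walkGains_switch])
    fun _ => by simp [walkGains_switch, Set.subset_def, mul_assoc, inv_mul_eq_one]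

section ContractDel

variable {T D : Finset Φ.E} {S' : Finset (Φ.contractDel T D).E}

def contractMk (Φ : GG 𝔊) (T D : Finset Φ.E) : Φ.V → (Φ.contractDel T D).V := Quot.mk _

theorem contractMk_surjective : (Φ.contractMk T D).Surjective := Quot.mk_surjective

theorem contractDel_dsrc (p : (Φ.contractDel T D).E × Bool) :
    (Φ.contractDel T D).dsrc p = Φ.contractMk T D (Φ.dsrc (p.1.1, p.2)) := by
  obtain ⟨_, _ | _⟩ := p <;> rfl

theorem contractDel_dtgt (p : (Φ.contractDel T D).E × Bool) :
    (Φ.contractDel T D).dtgt p = Φ.contractMk T D (Φ.dtgt (p.1.1, p.2)) := by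
  obtain ⟨_, _ | _⟩ := p <;> rfl

theorem contractDel_dgain (p : (Φ.contractDel T D).E × Bool) :
    (Φ.contractDel T D).dgain p = Φ.dgain (p.1.1, p.2) := by
  obtain ⟨_, _ | _⟩ := p <;> rfl

theorem contractMk_dsrc_eq_dtgt {p : Φ.E × Bool} (hp : p.1 ∈ T) :
    Φ.contractMk T D (Φ.dsrc p) = Φ.contractMk T D (Φ.dtgt p) := by
  obtain ⟨f, _ | _⟩ := p
  exacts [(Quot.sound ⟨f, hp, rfl, rfl⟩).symm, Quot.sound ⟨f, hp, rfl, rfl⟩]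

theorem one_mem_walkGains_of_contractMk_eq (hT : ∀ f ∈ T, f ∈ S ∧ Φ.gain f = 1) {x y : Φ.V}
    (h : Φ.contractMk T D x = Φ.contractMk T D y) : 1 ∈ Φ.walkGains S x y := by
  obtain h' := Quot.eqvGen_exact h
  clear h
  induction h' with
  | rel x y hxy =>
    obtain ⟨f, hf, rfl, rfl⟩ := hxy
    simpa [dgain, dsrc, dtgt, (hT f hf).2] using dgain_mem_walkGains (p := (f, true)) (hT f hf).1
  | refl => exact one_mem_walkGains _
  | symm _ _ _ ih => simpa using inv_mem_walkGains ih
  | trans _ _ _ _ _ ih₁ ih₂ => simpa using mul_mem_walkGains ih₁ ih₂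

theorem walkGains_contractDel (hS' : ∀ p, p ∈ S' ↔ p.1 ∈ S)
    (hT : ∀ f ∈ T, f ∈ S ∧ Φ.gain f = 1) (hD : ∀ f ∈ S, f ∈ D → f ∈ T) (u v : Φ.V) :
    (Φ.contractDel T D).walkGains S' (Φ.contractMk T D u) (Φ.contractMk T D v) =
      Φ.walkGains S u v := by
  ext g
  constructor
  · rintro ⟨w, hw, rfl⟩
    induction w generalizing u with
    | nil => exact one_mem_walkGains_of_contractMk_eq hT hw
    | cons p w ih =>
      obtain ⟨hp, hpu, hw⟩ := hw
      rw [contractDel_dsrc] at hpu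
      rw [contractDel_dtgt] at hw
      simpa [contractDel_dgain] using mul_mem_walkGains
        (one_mem_walkGains_of_contractMk_eq hT hpu.symm)
        (mul_mem_walkGains (dgain_mem_walkGains ((hS' _).1 hp)) (ih _ hw))
  · rintro ⟨w, hw, rfl⟩
    induction w generalizing u with
    | nil => exact ⟨[], congrArg _ hw, rfl⟩
    | cons p w ih =>
      obtain ⟨hp, rfl, hw⟩ := hw
      by_cases hpD : p.1 ∈ D
      · have hpT := hD _ hp hpD
        have hgain : Φ.dgain p = 1 := by obtain ⟨f, _ | _⟩ := p <;> simp [dgain, (hT _ hpT).2]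
        rw [contractMk_dsrc_eq_dtgt (D := D) hpT, List.map_cons, List.prod_cons, hgain, one_mul]
        exact ih _ hw
      · have hstep := dgain_mem_walkGains (Φ := Φ.contractDel T D) (p := (⟨p.1, hpD⟩, p.2))
          ((hS' _).2 hp)
        rw [contractDel_dsrc, contractDel_dtgt, contractDel_dgain] at hstep
        simpa using mul_mem_walkGains hstep (ih _ hw)

theorem c_contractDel (hS' : ∀ p, p ∈ S' ↔ p.1 ∈ S) (hT : ∀ f ∈ T, f ∈ S ∧ Φ.gain f = 1)
    (hD : ∀ f ∈ S, f ∈ D → f ∈ T) : (Φ.contractDel T D).c S' = Φ.c S :=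
  c_eq_of_walkGains _ contractMk_surjective fun u v => by
    rw [walkGains_contractDel hS' hT hD]

theorem b_contractDel (hS' : ∀ p, p ∈ S' ↔ p.1 ∈ S) (hT : ∀ f ∈ T, f ∈ S ∧ Φ.gain f = 1)
    (hD : ∀ f ∈ S, f ∈ D → f ∈ T) : (Φ.contractDel T D).b S' = Φ.b S :=
  b_eq_of_walkGains _ contractMk_surjective
    (fun u v => by rw [walkGains_contractDel hS' hT hD])
    fun v => by rw [walkGains_contractDel hS' hT hD]

end ContractDel

variable {e : Φ.E}

theorem c_contractDel_empty {S' : Finset (Φ.contractDel ∅ {e}).E} (heS : e ∉ S)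
    (hS' : ∀ p, p ∈ S' ↔ p.1 ∈ S) : (Φ.contractDel ∅ {e}).c S' = Φ.c S :=
  c_contractDel hS' (by simp) fun _ hf hfe => absurd (Finset.mem_singleton.1 hfe ▸ hf) heS

theorem b_contractDel_empty {S' : Finset (Φ.contractDel ∅ {e}).E} (heS : e ∉ S)
    (hS' : ∀ p, p ∈ S' ↔ p.1 ∈ S) : (Φ.contractDel ∅ {e}).b S' = Φ.b S :=
  b_contractDel hS' (by simp) fun _ hf hfe => absurd (Finset.mem_singleton.1 hfe ▸ hf) heS

open Classical in
theorem gain_switch_tgt (he : Φ.src e ≠ Φ.tgt e) :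
    (Φ.switch fun v => if v = Φ.tgt e then (Φ.gain e)⁻¹ else 1).gain e = 1 := by
  simp [switch, he]

theorem c_contractLink (he : Φ.src e ≠ Φ.tgt e) {S' : Finset (Φ.contractLink e).E}
    (heS : e ∈ S) (hS' : ∀ p, p ∈ S' ↔ p.1 ∈ S) : (Φ.contractLink e).c S' = Φ.c S :=
  (c_contractDel hS' (fun _ hf => (Finset.mem_singleton.1 hf).symm ▸ ⟨heS, gain_switch_tgt he⟩)
    fun _ _ h => h).trans (c_switch _)

theorem b_contractLink (he : Φ.src e ≠ Φ.tgt e) {S' : Finset (Φ.contractLink e).E}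
    (heS : e ∈ S) (hS' : ∀ p, p ∈ S' ↔ p.1 ∈ S) : (Φ.contractLink e).b S' = Φ.b S :=
  (b_contractDel hS' (fun _ hf => (Finset.mem_singleton.1 hf).symm ▸ ⟨heS, gain_switch_tgt he⟩)
    fun _ _ h => h).trans (b_switch _)

end GG

/-- The total chromatic polynomial satisfies deletion–contraction for every link. -/
theorem stmt_7 (Φ : GG 𝔊) (e : Φ.E) (he : Φ.src e ≠ Φ.tgt e) (q z : ℤ) :
    Φ.chiTotal q z = (Φ.contractDel ∅ {e}).chiTotal q z - (Φ.contractLink e).chiTotal q z := by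
  classical
  rw [GG.chiTotal, Finset.sum_univ_finset_eq_add e, sub_eq_add_neg, GG.chiTotal, GG.chiTotal,
    ← Finset.sum_neg_distrib]
  congr 1 <;> refine Finset.sum_congr rfl fun S' _ => ?_
  · have hS' (p : {x // x ∉ ({e} : Finset Φ.E)}) : p ∈ S' ↔ p.1 ∈ S'.map (.subtype _) :=
      (Finset.mem_map' _).symm
    have heS : e ∉ S'.map (.subtype _) := by simp
    rw [GG.c_contractDel_empty heS hS', GG.b_contractDel_empty heS hS', Finset.card_map]
    rfl
  · have hS' (p : {x // x ∉ ({e} : Finset Φ.E)}) :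
        p ∈ S' ↔ p.1 ∈ insert e (S'.map (.subtype _)) := by
      rw [Finset.mem_insert, or_iff_right (Finset.mem_singleton.not.1 p.2)]
      exact (Finset.mem_map' _).symm
    have heS : e ∉ S'.map (.subtype _) := by simp
    rw [GG.c_contractLink he (Finset.mem_insert_self _ _) hS',
      GG.b_contractLink he (Finset.mem_insert_self _ _) hS', Finset.card_insert_of_notMem heS,
      Finset.card_map, pow_succ]
    change _ = -((-1) ^ S'.card * _ * _)
    ring
end

section
/- For integers q ≥ n−1, the number of injections κ : [n] → [q] such that for all i < j, κ(j) ≠ κ(i) − 1, equals (q−n+1)^n. -/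
namespace Stmt13

open Finset

variable {n q : ℕ}

def lexlt (g : Fin n → ℕ) (j i : Fin n) : Prop :=
  g j < g i ∨ (g j = g i ∧ j < i)

instance (g : Fin n → ℕ) (j i : Fin n) : Decidable (lexlt g j i) := by
  unfold lexlt; infer_instance

def rk (g : Fin n → ℕ) (i : Fin n) : ℕ :=
  (univ.filter fun j => lexlt g j i).card

def rlow (g : Fin n → ℕ) (i : Fin n) : ℕ :=
  (univ.filter fun j => g j < g i).card

lemma lexlt_irrefl (g : Fin n → ℕ) (i : Fin n) : ¬ lexlt g i i := by
  unfold lexlt; simp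

lemma lexlt_trans {g : Fin n → ℕ} {a b c : Fin n} (h1 : lexlt g a b) (h2 : lexlt g b c) :
    lexlt g a c := by
  unfold lexlt at *
  rcases h1 with h1 | ⟨h1, h1'⟩ <;> rcases h2 with h2 | ⟨h2, h2'⟩
  · exact Or.inl (h1.trans h2)
  · exact Or.inl (h2 ▸ h1)
  · exact Or.inl (h1 ▸ h2)
  · exact Or.inr ⟨h1.trans h2, h1'.trans h2'⟩

lemma lexlt_trichotomy (g : Fin n → ℕ) (j i : Fin n) :
    lexlt g j i ∨ j = i ∨ lexlt g i j := by
  unfold lexlt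
  rcases lt_trichotomy (g j) (g i) with h | h | h
  · exact Or.inl (Or.inl h)
  · rcases lt_trichotomy j i with h2 | h2 | h2
    · exact Or.inl (Or.inr ⟨h, h2⟩)
    · exact Or.inr (Or.inl h2)
    · exact Or.inr (Or.inr (Or.inr ⟨h.symm, h2⟩))
  · exact Or.inr (Or.inr (Or.inl h))

lemma rk_lt_rk {g : Fin n → ℕ} {j i : Fin n} (h : lexlt g j i) : rk g j < rk g i := by
  apply Finset.card_lt_card
  rw [Finset.ssubset_iff_of_subset]
  · exact ⟨j, by simpa using h, by simpa using lexlt_irrefl g j⟩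
  · intro k hk
    simp only [mem_filter, mem_univ, true_and] at *
    exact lexlt_trans hk h

lemma le_of_lexlt {g : Fin n → ℕ} {j i : Fin n} (h : lexlt g j i) : g j ≤ g i := by
  rcases h with h | ⟨h, _⟩
  · exact h.le
  · exact h.le

lemma phi_lt {g : Fin n → ℕ} {j i : Fin n} (h : lexlt g j i) :
    g j + rk g j < g i + rk g i := by
  have h1 := rk_lt_rk h
  have h2 := le_of_lexlt h
  omega

lemma phi_lt_iff {g : Fin n → ℕ} {j i : Fin n} :
    g j + rk g j < g i + rk g i ↔ lexlt g j i := by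
  constructor
  · intro h
    rcases lexlt_trichotomy g j i with h2 | he | h2
    · exact h2
    · subst he; omega
    · have := phi_lt h2; omega
  · exact phi_lt

lemma rk_le (g : Fin n → ℕ) (i : Fin n) : rk g i ≤ n - 1 := by
  have hsub : (univ.filter fun j => lexlt g j i) ⊆ univ.erase i := by
    intro k hk
    simp only [mem_filter, mem_univ, true_and] at hk
    refine Finset.mem_erase.mpr ⟨?_, mem_univ k⟩
    intro hke; rw [hke] at hk; exact lexlt_irrefl g i hk
  calc rk g i ≤ (univ.erase i).card := Finset.card_le_card hsub
  _ = n - 1 := by simp [Finset.card_erase_of_mem]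

variable {κ : Fin n → ℕ}

lemma rlow_le (hinj : Function.Injective κ) (i : Fin n) : rlow κ i ≤ κ i := by
  have h : (univ.filter fun j => κ j < κ i).card ≤ (Finset.range (κ i)).card := by
    apply Finset.card_le_card_of_injOn κ
    · intro k hk; simp at hk ⊢; exact hk
    · exact fun a _ b _ hab => hinj hab
  simpa [rlow] using h

lemma high_bound (hinj : Function.Injective κ) (hbnd : ∀ k, κ k < q) (i : Fin n) :
    (univ.filter fun j => κ i < κ j).card + κ i + 1 ≤ q := by
  have h1 : (univ.filter fun j => κ i < κ j).card ≤ (Finset.Ico (κ i + 1) q).card := by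
    apply Finset.card_le_card_of_injOn κ
    · intro k hk; simp at hk ⊢; exact ⟨hk, hbnd k⟩
    · exact fun a _ b _ hab => hinj hab
  have h2 := hbnd i
  simp [Nat.card_Ico] at h1
  omega

lemma low_high (hinj : Function.Injective κ) (i : Fin n) :
    rlow κ i + (univ.filter fun j => κ i < κ j).card + 1 = n := by
  have hc := Finset.card_filter_add_card_filter_not
    (s := (univ : Finset (Fin n))) (p := fun j => κ j < κ i)
  have heq : (univ.filter fun j => ¬ κ j < κ i) = insert i (univ.filter fun j => κ i < κ j) := by
    ext k
    simp only [mem_filter, mem_univ, true_and, Finset.mem_insert, not_lt]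
    constructor
    · intro hk
      rcases eq_or_ne k i with rfl | hne
      · exact Or.inl rfl
      · right
        have : κ k ≠ κ i := fun hh => hne (hinj hh)
        omega
    · rintro (rfl | hk)
      · exact le_refl _
      · exact hk.le
  rw [heq, Finset.card_insert_of_notMem (by simp)] at hc
  simp only [Finset.card_univ, Fintype.card_fin] at hc
  unfold rlow
  omega

lemma psi_bound (hinj : Function.Injective κ) (hbnd : ∀ k, κ k < q) (i : Fin n) :
    κ i - rlow κ i < q + 1 - n := by
  have h1 := low_high hinj i
  have h2 := high_bound hinj hbnd i
  have h3 := rlow_le hinj i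
  omega

lemma rlow_decomp {i j : Fin n} (hle : κ j ≤ κ i) :
    rlow κ i = rlow κ j + (univ.filter fun k => κ j ≤ κ k ∧ κ k < κ i).card := by
  unfold rlow
  rw [← Finset.card_union_of_disjoint]
  · congr 1
    ext k
    simp only [mem_union, mem_filter, mem_univ, true_and]
    omega
  · rw [Finset.disjoint_left]
    intro k hk1 hk2
    simp only [mem_filter, mem_univ, true_and] at hk1 hk2
    omega

lemma between_le (hinj : Function.Injective κ) {i j : Fin n} :
    (univ.filter fun k => κ j ≤ κ k ∧ κ k < κ i).card ≤ κ i - κ j := by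
  have h : (univ.filter fun k => κ j ≤ κ k ∧ κ k < κ i).card ≤ (Finset.Ico (κ j) (κ i)).card := by
    apply Finset.card_le_card_of_injOn κ
    · intro k hk; simp at hk ⊢; exact hk
    · exact fun a _ b _ hab => hinj hab
  simpa [Nat.card_Ico] using h

lemma between_surj (hinj : Function.Injective κ) {i j : Fin n}
    (hcard : (univ.filter fun k => κ j ≤ κ k ∧ κ k < κ i).card = κ i - κ j)
    {v : ℕ} (h1 : κ j ≤ v) (h2 : v < κ i) : ∃ k, κ k = v := by
  have himg : (univ.filter fun k => κ j ≤ κ k ∧ κ k < κ i).image κ = Finset.Ico (κ j) (κ i) := by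
    apply Finset.eq_of_subset_of_card_le
    · intro v hv
      simp only [Finset.mem_image, mem_filter, mem_univ, true_and] at hv
      obtain ⟨k, hk, rfl⟩ := hv
      exact Finset.mem_Ico.mpr hk
    · rw [Finset.card_image_of_injOn (fun a _ b _ hab => hinj hab), Nat.card_Ico, hcard]
  have hv : v ∈ Finset.Ico (κ j) (κ i) := Finset.mem_Ico.mpr ⟨h1, h2⟩
  rw [← himg] at hv
  simp only [Finset.mem_image, mem_filter, mem_univ, true_and] at hv
  obtain ⟨k, _, hk⟩ := hv
  exact ⟨k, hk⟩

lemma g_mono (hinj : Function.Injective κ) {i j : Fin n} (hlt : κ j < κ i) :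
    κ j - rlow κ j ≤ κ i - rlow κ i := by
  have hd := rlow_decomp (κ := κ) (i := i) (j := j) (le_of_lt hlt)
  have hb := between_le hinj (i := i) (j := j)
  have h1 := rlow_le hinj i
  have h2 := rlow_le hinj j
  omega

lemma chain (hinj : Function.Injective κ) (hcond : ∀ i j : Fin n, i < j → κ j + 1 ≠ κ i) :
    ∀ d (i j : Fin n), κ j < κ i → κ i ≤ κ j + d →
      κ j - rlow κ j = κ i - rlow κ i → j < i := by
  intro d
  induction d with
  | zero => intro i j h1 h2 _; omega
  | succ d ih =>
    intro i j h1 h2 hg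
    rcases eq_or_lt_of_le (Nat.succ_le_of_lt h1) with heq | hlt
    · -- κ j + 1 = κ i
      rcases lt_trichotomy j i with h | h | h
      · exact h
      · exfalso; rw [h] at h1; omega
      · exact absurd heq (hcond i j h)
    · have hd := rlow_decomp (κ := κ) (i := i) (j := j) (le_of_lt h1)
      have hb := between_le hinj (i := i) (j := j)
      have h1' := rlow_le hinj i
      have h2' := rlow_le hinj j
      have hcard : (univ.filter fun k => κ j ≤ κ k ∧ κ k < κ i).card = κ i - κ j := by omega
      obtain ⟨k, hk⟩ := between_surj hinj hcard (v := κ i - 1) (by omega) (by omega)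
      have hjk : κ j < κ k := by omega
      have hki : κ k < κ i := by omega
      have m1 := g_mono hinj hjk
      have m2 := g_mono hinj hki
      have hgk : κ j - rlow κ j = κ k - rlow κ k := by omega
      have hjk' : j < k := ih k j hjk (by omega) hgk
      have hki' : k < i := by
        rcases lt_trichotomy k i with h' | h' | h'
        · exact h'
        · exfalso; rw [h'] at hki; omega
        · exact absurd (show κ k + 1 = κ i by omega) (hcond i k h')
      exact hjk'.trans hki'

lemma lexlt_of_lt (hinj : Function.Injective κ) (hcond : ∀ i j : Fin n, i < j → κ j + 1 ≠ κ i)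
    {i j : Fin n} (hlt : κ j < κ i) : lexlt (fun k => κ k - rlow κ k) j i := by
  have hm := g_mono hinj hlt
  rcases eq_or_lt_of_le hm with heq | h
  · exact Or.inr ⟨heq, chain hinj hcond (κ i) i j hlt (by omega) heq⟩
  · exact Or.inl h

lemma lexlt_iff (hinj : Function.Injective κ) (hcond : ∀ i j : Fin n, i < j → κ j + 1 ≠ κ i)
    {i j : Fin n} : lexlt (fun k => κ k - rlow κ k) j i ↔ κ j < κ i := by
  constructor
  · intro h
    rcases lt_trichotomy (κ j) (κ i) with h' | h' | h'
    · exact h'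
    · exact absurd h (by rw [hinj h']; exact lexlt_irrefl _ _)
    · exact absurd (lexlt_trans h (lexlt_of_lt hinj hcond h')) (lexlt_irrefl _ _)
  · exact lexlt_of_lt hinj hcond

end Stmt13

open Stmt13 in
/-- Integral chromatic function of the Shi gain graph: for `q ≥ n−1`, the number of
injections `κ : [n] → [q]` such that for all `i < j`, `κ(j) ≠ κ(i) − 1`,
equals `(q−n+1)^n`. -/
theorem stmt_13 (n q : ℕ) (h : n - 1 ≤ q) :
    Nat.card {κ : Fin n → Fin q // Function.Injective κ ∧
        ∀ i j : Fin n, i < j → (κ j : ℤ) ≠ (κ i : ℤ) - 1} =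
      (q + 1 - n) ^ n := by
  classical
  have e : {κ : Fin n → Fin q // Function.Injective κ ∧
        ∀ i j : Fin n, i < j → (κ j : ℤ) ≠ (κ i : ℤ) - 1} ≃ (Fin n → Fin (q + 1 - n)) := by
    refine
      { toFun := fun κp i =>
          ⟨(κp.1 i : ℕ) - rlow (fun k => (κp.1 k : ℕ)) i, ?_⟩
        invFun := fun g =>
          ⟨fun i => ⟨(g i : ℕ) + rk (fun k => (g k : ℕ)) i, ?_⟩, ?_, ?_⟩
        left_inv := ?_
        right_inv := ?_ }
    · -- bound for toFun
      exact psi_bound (fun a b hab => κp.2.1 (Fin.val_injective hab)) (fun k => (κp.1 k).isLt) i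
    · -- bound for invFun values
      have h1 := rk_le (fun k => ((g k : ℕ))) i
      have h2 : (g i : ℕ) < q + 1 - n := (g i).isLt
      have h3 : 0 < n := i.pos
      omega
    · -- injectivity of invFun result
      intro a b hab
      have hab' : (g a : ℕ) + rk (fun k => (g k : ℕ)) a = (g b : ℕ) + rk (fun k => (g k : ℕ)) b :=
        congrArg Fin.val hab
      rcases lexlt_trichotomy (fun k => (g k : ℕ)) a b with h' | h' | h'
      · exact absurd (phi_lt h') (by omega)
      · exact h'
      · exact absurd (phi_lt h') (by omega)
    · -- the Shi condition for invFun result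
      intro i j hij heq
      have heq2 : (((g j : ℕ) + rk (fun k => (g k : ℕ)) j : ℕ) : ℤ)
          = (((g i : ℕ) + rk (fun k => (g k : ℕ)) i : ℕ) : ℤ) - 1 := heq
      have heq' : (g j : ℕ) + rk (fun k => (g k : ℕ)) j + 1
          = (g i : ℕ) + rk (fun k => (g k : ℕ)) i := by omega
      have hlt : (g j : ℕ) + rk (fun k => (g k : ℕ)) j < (g i : ℕ) + rk (fun k => (g k : ℕ)) i := by
        omega
      rcases (phi_lt_iff (g := fun k => ((g k : ℕ)))).mp hlt with h' | ⟨_, h'⟩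
      · have h2 := rk_lt_rk (g := fun k => (g k : ℕ)) ((phi_lt_iff (g := fun k => ((g k : ℕ)))).mp hlt)
        have h3 : (g j : ℕ) < (g i : ℕ) := h'
        omega
      · exact absurd h' (Fin.lt_asymm hij)
    · -- right inverse
      intro κp
      obtain ⟨κ, hinj, hcond⟩ := κp
      have hinj' : Function.Injective (fun k => (κ k : ℕ)) :=
        fun a b hab => hinj (Fin.val_injective hab)
      have hcond' : ∀ i j : Fin n, i < j → (κ j : ℕ) + 1 ≠ (κ i : ℕ) := by
        intro i j hij hne
        apply hcond i j hij
        have : ((κ j : ℕ) : ℤ) + 1 = ((κ i : ℕ) : ℤ) := by exact_mod_cast hne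
        push_cast
        omega
      apply Subtype.ext
      funext i
      apply Fin.val_injective
      show ((κ i : ℕ) - rlow (fun k => (κ k : ℕ)) i)
          + rk (fun k => (κ k : ℕ) - rlow (fun t => (κ t : ℕ)) k) i = (κ i : ℕ)
      have hr : rk (fun k => (κ k : ℕ) - rlow (fun t => (κ t : ℕ)) k) i
          = rlow (fun k => (κ k : ℕ)) i := by
        unfold rlow rk
        congr 1
        ext k
        simp only [Finset.mem_filter, Finset.mem_univ, true_and]
        exact lexlt_iff hinj' hcond'
      rw [hr]
      have := rlow_le hinj' i
      omega
    · -- left inverse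
      intro g
      funext i
      apply Fin.val_injective
      show ((g i : ℕ) + rk (fun k => (g k : ℕ)) i)
          - rlow (fun k => (g k : ℕ) + rk (fun t => (g t : ℕ)) k) i = (g i : ℕ)
      have hr : rlow (fun k => (g k : ℕ) + rk (fun t => (g t : ℕ)) k) i
          = rk (fun t => (g t : ℕ)) i := by
        unfold rlow rk
        congr 1
        ext k
        simp only [Finset.mem_filter, Finset.mem_univ, true_and]
        exact phi_lt_iff (g := fun t => ((g t : ℕ)))
      rw [hr]
      omega
  rw [Nat.card_congr e]
  simp [Nat.card_eq_fintype_card]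
end

section
/- For integers q > n, the number of maps κ : [n] → ℤ_q such that κ is injective and for all i < j, κ(j) ≠ κ(i) + 1 (mod q), equals q(q−n)^{n−1}. -/
/-!
Translating all colours by a constant preserves the conditions. Hence the colourings of
`Fin (m + 1)` are a free choice of the last colour times those with last colour `-1`, and the
ones avoiding the colour `-1` are the translates `κ + c` of a colouring `κ` with last colour `-1`
by the `q - (m + 1)` constants with `-1 - c` outside the range of `κ`.
A colouring `Fin (m + 1) → ℤ_(q+1)` with last colour `-1` is a colouring of `Fin m` avoiding `-1`
and `-2`; deleting the point `-1` from the cycle `ℤ_(q+1)` makes it a colouring into `ℤ_q`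
avoiding `-1`. So the number `A m q` of colourings `Fin m → ℤ_q` avoiding `-1` satisfies
`A (m + 1) (q + 1) = (q - m) * A m q`, i.e. `A m q = (q - m) ^ m`.
-/

open Function

def IsShiColoring {G : Type*} [Add G] [One G] {n : ℕ} (κ : Fin n → G) : Prop :=
  Injective κ ∧ ∀ i j : Fin n, i < j → κ j ≠ κ i + 1

theorem card_forall_add_ne {G : Type*} [AddCommGroup G] [Finite G] {k : ℕ} {κ : Fin k → G}
    (hκ : Injective κ) (v : G) :
    Nat.card {c : G // ∀ i, κ i + c ≠ v} = Nat.card G - k := by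
  have e : {c : G // ∀ i, κ i + c ≠ v} ≃ ↥(Set.range κ)ᶜ :=
    (Equiv.subLeft v).subtypeEquiv fun c => by simp [eq_sub_iff_add_eq]
  rw [Nat.card_congr e, Nat.card_coe_set_eq, Set.ncard_compl, Set.ncard_range_of_injective hκ,
    Nat.card_fin]

section Snoc

variable {G : Type*} [Add G] [One G]

theorem isShiColoring_snoc_iff {n : ℕ} {κ : Fin n → G} {v : G} :
    IsShiColoring (Fin.snoc κ v : Fin (n + 1) → G) ↔
      IsShiColoring κ ∧ ∀ i, κ i ≠ v ∧ κ i + 1 ≠ v := by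
  simp only [IsShiColoring, Fin.snoc_injective_iff, Fin.forall_fin_succ', Fin.snoc_castSucc,
    Fin.snoc_last, Fin.castSucc_lt_castSucc_iff, Fin.castSucc_lt_last, lt_irrefl,
    not_lt.2 (Fin.le_last _), Set.mem_range, not_exists, forall_const, false_imp_iff, and_true,
    forall_and, ne_comm (a := v)]
  tauto

def shiColoringSnocEquiv (m : ℕ) (v : G) :
    {κ : Fin m → G // IsShiColoring κ ∧ ∀ i, κ i ≠ v ∧ κ i + 1 ≠ v} ≃
      {κ : Fin (m + 1) → G // IsShiColoring κ ∧ κ (Fin.last m) = v} where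
  toFun κ := ⟨Fin.snoc κ.1 v, isShiColoring_snoc_iff.2 κ.2, Fin.snoc_last _ _⟩
  invFun κ := ⟨Fin.init κ.1, isShiColoring_snoc_iff.1 <| by
    have h := Fin.snoc_init_self κ.1
    rw [κ.2.2] at h
    rw [h]
    exact κ.2.1⟩
  left_inv κ := Subtype.ext (Fin.init_snoc (α := fun _ => G) _ _)
  right_inv := by
    rintro ⟨κ, hκ, rfl⟩
    exact Subtype.ext (Fin.snoc_init_self κ)

end Snoc

section Translation

variable {G : Type*} [AddCommGroup G] [One G]

theorem isShiColoring_add_const_iff {n : ℕ} {κ : Fin n → G} (c : G) :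
    IsShiColoring (fun i => κ i + c) ↔ IsShiColoring κ := by
  refine and_congr ((add_left_injective c).of_comp_iff κ) ?_
  simp only [add_right_comm _ c, ne_eq, add_left_inj]

def shiColoringTranslateEquiv (m : ℕ) (v : G) :
    {κ : Fin (m + 1) → G // IsShiColoring κ ∧ κ (Fin.last m) = v} × G ≃
      {κ : Fin (m + 1) → G // IsShiColoring κ} where
  toFun p := ⟨fun i => p.1.1 i + p.2, (isShiColoring_add_const_iff p.2).2 p.1.2.1⟩
  invFun κ :=
    (⟨fun i => κ.1 i + (v - κ.1 (Fin.last m)), (isShiColoring_add_const_iff _).2 κ.2,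
      add_sub_cancel _ _⟩, κ.1 (Fin.last m) - v)
  left_inv := by
    rintro ⟨⟨κ, hκ, rfl⟩, c⟩
    ext i <;> simp
  right_inv κ := by
    ext i
    simp [add_assoc]

theorem card_isShiColoring (m : ℕ) (v : G) :
    Nat.card {κ : Fin (m + 1) → G // IsShiColoring κ} =
      Nat.card G * Nat.card {κ : Fin (m + 1) → G // IsShiColoring κ ∧ κ (Fin.last m) = v} := by
  rw [← Nat.card_congr (shiColoringTranslateEquiv m v), Nat.card_prod, mul_comm]

theorem card_isShiColoring_forall_ne [Finite G] (m : ℕ) (v : G) :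
    Nat.card {κ : Fin (m + 1) → G // IsShiColoring κ ∧ ∀ i, κ i ≠ v} =
      (Nat.card G - (m + 1)) *
        Nat.card {κ : Fin (m + 1) → G // IsShiColoring κ ∧ κ (Fin.last m) = v} := by
  let U := {κ : Fin (m + 1) → G // IsShiColoring κ ∧ κ (Fin.last m) = v}
  have := Fintype.ofFinite U
  calc _ = Nat.card {p : U × G // ∀ i, p.1.1 i + p.2 ≠ v} :=
        Nat.card_congr <| (Equiv.subtypeSubtypeEquivSubtypeInter _ _).symm.trans
          ((shiColoringTranslateEquiv m v).subtypeEquiv fun _ => Iff.rfl).symm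
    _ = ∑ κ : U, Nat.card {c : G // ∀ i, κ.1 i + c ≠ v} := by
        rw [Nat.card_congr (Equiv.subtypeProdEquivSigmaSubtype
          fun (κ : U) c => ∀ i, κ.1 i + c ≠ v), Nat.card_sigma]
    _ = _ := by
        rw [Finset.sum_congr rfl fun κ _ => card_forall_add_ne κ.2.1.1 v, Finset.sum_const,
          Finset.card_univ, smul_eq_mul, ← Nat.card_eq_fintype_card, mul_comm]

end Translation

namespace ZMod

theorem cast_succ_neg_one_add_one {q : ℕ} : ((-1 : ZMod q).cast : ZMod (q + 1)) + 1 = -1 := by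
  rw [cast_neg_one, sub_add_cancel, eq_neg_iff_add_eq_zero, ← Nat.cast_add_one, natCast_self]

variable {q : ℕ} [NeZero q]

theorem val_add_one_of_ne_neg_one {x : ZMod q} (hx : x ≠ -1) : (x + 1).val = x.val + 1 := by
  have hlt : x.val + 1 ≠ q := fun h => hx <| by
    rw [eq_neg_iff_add_eq_zero, ← natCast_zmod_val x, ← Nat.cast_add_one, h, natCast_self]
  have hx1 : x + 1 = ((x.val + 1 : ℕ) : ZMod q) := by rw [Nat.cast_add_one, natCast_zmod_val]
  rw [hx1, val_cast_of_lt (by have := x.val_lt; omega)]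

theorem cast_succ_ne_neg_one (x : ZMod q) : (x.cast : ZMod (q + 1)) ≠ -1 := fun h => by
  have hval := congrArg val h
  rw [val_cast_eq_val_of_lt (x.val_lt.trans q.lt_succ_self)] at hval
  exact x.val_lt.ne (hval.trans (val_neg_one q))

theorem cast_succ_add_one {x : ZMod q} (hx : x ≠ -1) :
    ((x + 1).cast : ZMod (q + 1)) = x.cast + 1 := by
  rw [cast_eq_val, cast_eq_val, val_add_one_of_ne_neg_one hx, Nat.cast_add_one]

theorem cast_cast_succ_of_ne_neg_one {y : ZMod (q + 1)} (hy : y ≠ -1) :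
    ((y.cast : ZMod q).cast : ZMod (q + 1)) = y := by
  have hlt : y.val < q := by
    have := y.val_lt
    have : y.val ≠ q := fun h => hy (val_injective _ (h.trans (val_neg_one q).symm))
    omega
  apply val_injective
  rw [val_cast_eq_val_of_lt ((val_lt _).trans q.lt_succ_self), val_cast_eq_val_of_lt hlt]

end ZMod

section Deletion

variable {q : ℕ} [NeZero q]

theorem isShiColoring_cast_succ_comp_iff {n : ℕ} {κ : Fin n → ZMod q} (hκ : ∀ i, κ i ≠ -1) :
    IsShiColoring (fun i => ((κ i).cast : ZMod (q + 1))) ↔ IsShiColoring κ := by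
  refine and_congr ((ZMod.cast_injective_of_le q.le_succ).of_comp_iff κ) ?_
  simp only [← ZMod.cast_succ_add_one (hκ _), ne_eq, (ZMod.cast_injective_of_le q.le_succ).eq_iff]

theorem card_isShiColoring_last_eq_neg_one (m : ℕ) :
    Nat.card {κ : Fin (m + 1) → ZMod (q + 1) // IsShiColoring κ ∧ κ (Fin.last m) = -1} =
      Nat.card {κ : Fin m → ZMod q // IsShiColoring κ ∧ ∀ i, κ i ≠ -1} := by
  let f : {κ : Fin m → ZMod q // IsShiColoring κ ∧ ∀ i, κ i ≠ -1} →
      {κ : Fin m → ZMod (q + 1) // IsShiColoring κ ∧ ∀ i, κ i ≠ -1 ∧ κ i + 1 ≠ -1} :=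
    fun κ => ⟨fun i => (κ.1 i).cast, (isShiColoring_cast_succ_comp_iff κ.2.2).2 κ.2.1, fun i =>
      ⟨ZMod.cast_succ_ne_neg_one _, ZMod.cast_succ_add_one (κ.2.2 i) ▸ ZMod.cast_succ_ne_neg_one _⟩⟩
  have hinj : f.Injective := fun κ₁ κ₂ h => Subtype.ext <| funext fun i =>
    ZMod.cast_injective_of_le q.le_succ (congrFun (congrArg Subtype.val h) i)
  have hsurj : f.Surjective := by
    rintro ⟨κ, hκ, hne⟩
    have hcast : ∀ i, ((κ i).cast : ZMod q).cast = κ i := fun i =>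
      ZMod.cast_cast_succ_of_ne_neg_one (hne i).1
    have hne' : ∀ i, ((κ i).cast : ZMod q) ≠ -1 := fun i h =>
      (hne i).2 (by rw [← hcast i, h, ZMod.cast_succ_neg_one_add_one])
    refine ⟨⟨fun i => (κ i).cast, (isShiColoring_cast_succ_comp_iff hne').1 ?_, hne'⟩,
      Subtype.ext (funext hcast)⟩
    simpa only [hcast] using hκ
  rw [← Nat.card_congr (shiColoringSnocEquiv m _)]
  exact (Nat.card_congr (Equiv.ofBijective f ⟨hinj, hsurj⟩)).symm

end Deletion

theorem card_isShiColoring_forall_ne_neg_one {m q : ℕ} (h : m < q) :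
    Nat.card {κ : Fin m → ZMod q // IsShiColoring κ ∧ ∀ i, κ i ≠ -1} = (q - m) ^ m := by
  induction m generalizing q with
  | zero => simp [IsShiColoring, Function.injective_of_subsingleton]
  | succ m ih =>
    obtain ⟨q, rfl⟩ : ∃ p, q = p + 1 := ⟨q - 1, by omega⟩
    have : NeZero q := ⟨by omega⟩
    rw [card_isShiColoring_forall_ne, Nat.card_zmod, card_isShiColoring_last_eq_neg_one,
      ih (by omega), Nat.add_sub_add_right, pow_succ, mul_comm]

/-- Modular chromatic function of the Shi gain graph: for `q > n`, the number of
injections `κ : [n] → ℤ_q` with `κ(j) ≠ κ(i) + 1 (mod q)` for all `i < j`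
equals `q·(q−n)^{n−1}`. -/
theorem stmt_14 (n q : ℕ) (hn : 1 ≤ n) (h : n < q) :
    Nat.card {κ : Fin n → ZMod q // Function.Injective κ ∧
        ∀ i j : Fin n, i < j → κ j ≠ κ i + 1} =
      q * (q - n) ^ (n - 1) := by
  obtain ⟨m, rfl⟩ : ∃ m, n = m + 1 := ⟨n - 1, by omega⟩
  obtain ⟨q, rfl⟩ : ∃ p, q = p + 1 := ⟨q - 1, by omega⟩
  have : NeZero q := ⟨by omega⟩
  change Nat.card {κ // IsShiColoring κ} = _
  rw [card_isShiColoring m (-1), Nat.card_zmod, card_isShiColoring_last_eq_neg_one,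
    card_isShiColoring_forall_ne_neg_one (by omega), Nat.add_sub_add_right, Nat.add_sub_cancel]
end

section
/- Let π = {X₁,…,X_k} be a partition of [n] with blocks indexed so that min X₁ < min X₂ < ⋯ < min X_k, let Γ_π be the interval graph on [k] where i ∼ j iff the intervals [min X_i, max X_i] and [min X_j, max X_j] overlap, and let d_i be the number of j < i adjacent to i in Γ_π. Then the number of injections κ : [k] → [q] such that κ(j) ≠ κ(i) + 1 for all i < j, and κ(i) ≠ κ(j) + 1 for all i < j with i ∼ j in Γ_π, equals ∏_{i=1}^k (q − k + 1 − d_i), for all integers q ≥ k − 1 + max_i d_i. -/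
/-!
Induct on the number of blocks, removing the last one. Given an admissible colouring `b` of the
first `k` blocks with `r` colours and a colour `t ≤ r`, shift every colour `≥ t` up by one and give
the last block colour `t`. This is admissible iff `t - 1` is not a colour of `b` and `t` is not the
colour of a block overlapping the last one; conversely every admissible colouring arises in this
way exactly once, since `t - 1` being unused means that closing the gap at `t` creates no new
consecutive pair. An interval overlapping the last block overlaps every block in between, so the
two sets of forbidden values of `t` are disjoint and there are exactly `r + 1 - k - d_k` choices.
-/

open Function Finset

namespace Fin
variable {n : ℕ}

lemma forall_lt_fin_succ' {P : Fin (n + 1) → Fin (n + 1) → Prop} :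
    (∀ i j, i < j → P i j) ↔
      (∀ i j : Fin n, i < j → P i.castSucc j.castSucc) ∧ ∀ i : Fin n, P i.castSucc (last n) := by
  refine ⟨fun h => ⟨fun i j hij => h _ _ (castSucc_lt_castSucc_iff.2 hij),
    fun i => h _ _ (castSucc_lt_last i)⟩, fun ⟨hcast, hlast⟩ i j hij => ?_⟩
  induction i using lastCases with
  | last => exact absurd hij (not_lt.2 (le_last j))
  | cast i =>
    induction j using lastCases with
    | last => exact hlast i
    | cast j => exact hcast i j (castSucc_lt_castSucc_iff.1 hij)

section
variable (p : Fin (n + 1))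

lemma val_succAbove (i : Fin n) :
    (p.succAbove i : ℕ) = if (i : ℕ) < p then (i : ℕ) else i + 1 := by
  unfold succAbove
  split_ifs <;> simp_all [Fin.lt_def]

lemma val_succAbove_eq_succAbove_add_one_iff {x y : Fin n} (hp : (p : ℕ) ≠ x + 1) :
    (p.succAbove y : ℕ) = p.succAbove x + 1 ↔ (y : ℕ) = x + 1 := by
  simp only [val_succAbove]
  split_ifs <;> omega

lemma val_eq_succAbove_add_one_iff (x : Fin n) :
    (p : ℕ) = p.succAbove x + 1 ↔ (p : ℕ) = x + 1 := by
  simp only [val_succAbove]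
  split_ifs <;> omega

lemma val_succAbove_eq_add_one_iff (x : Fin n) :
    (p.succAbove x : ℕ) = p + 1 ↔ (x : ℕ) = p := by
  simp only [val_succAbove]
  split_ifs <;> omega

end

lemma card_subtype_castSucc {P : Fin (n + 1) → Prop} (h : ¬ P (last n)) :
    Nat.card {j // P j} = Nat.card {j : Fin n // P j.castSucc} := by
  refine (Nat.card_eq_of_bijective (fun j => ⟨j.1.castSucc, j.2⟩) ⟨fun i j hij => ?_, ?_⟩).symm
  · exact Subtype.ext (castSucc_injective n (congrArg Subtype.val hij))
  · rintro ⟨j, hj⟩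
    have hj' : j ≠ last n := by rintro rfl; exact h hj
    obtain ⟨j, rfl⟩ := exists_castSucc_eq.2 hj'
    exact ⟨⟨j, hj⟩, rfl⟩

end Fin

variable {k q r : ℕ}

structure IsAdmissible (E : Fin k → Fin k → Prop) (κ : Fin k → Fin q) : Prop where
  injective : Injective κ
  succ_ne : ∀ ⦃i j⦄, i < j → (κ j : ℕ) ≠ κ i + 1
  ne_succ : ∀ ⦃i j⦄, i < j → E i j → (κ i : ℕ) ≠ κ j + 1

lemma isAdmissible_iff (E : Fin k → Fin k → Prop) (κ : Fin k → Fin q) :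
    IsAdmissible E κ ↔ Injective κ ∧ (∀ i j, i < j → (κ j : ℕ) ≠ κ i + 1) ∧
      ∀ i j, i < j → E i j → (κ i : ℕ) ≠ κ j + 1 :=
  ⟨fun h => ⟨h.1, h.2, h.3⟩, fun h => ⟨h.1, h.2.1, h.2.2⟩⟩

lemma isAdmissible_iff_int (E : Fin k → Fin k → Prop) (κ : Fin k → Fin q) :
    IsAdmissible E κ ↔ Injective κ ∧ ∀ i j : Fin k, i < j →
      ((κ j : ℤ) ≠ (κ i : ℤ) + 1 ∧ (E i j → (κ i : ℤ) ≠ (κ j : ℤ) + 1)) := by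
  have hcast (a b : Fin q) : ((a : ℤ) = b + 1) ↔ (a : ℕ) = b + 1 := by omega
  simp only [isAdmissible_iff, ne_eq, hcast, imp_and, forall_and]

lemma isAdmissible_snoc_iff (E : Fin (k + 1) → Fin (k + 1) → Prop) (c : Fin k → Fin q)
    (s : Fin q) :
    IsAdmissible E (Fin.snoc c s : Fin (k + 1) → Fin q) ↔ IsAdmissible (E on Fin.castSucc) c ∧
      ∀ i, c i ≠ s ∧ (s : ℕ) ≠ c i + 1 ∧ (E i.castSucc (Fin.last k) → (c i : ℕ) ≠ s + 1) := by
  simp only [isAdmissible_iff, Fin.snoc_injective_iff, Fin.forall_lt_fin_succ', Fin.snoc_castSucc,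
    Fin.snoc_last, onFun, Set.mem_range, not_exists]
  grind

lemma isAdmissible_succAbove_comp_iff (E : Fin k → Fin k → Prop) (b : Fin k → Fin r)
    (t : Fin (r + 1)) (ht : ∀ i, (t : ℕ) ≠ b i + 1) :
    IsAdmissible E (t.succAbove ∘ b) ↔ IsAdmissible E b := by
  have hsucc (x y : Fin k) :
      (t.succAbove (b y) : ℕ) = t.succAbove (b x) + 1 ↔ (b y : ℕ) = b x + 1 :=
    Fin.val_succAbove_eq_succAbove_add_one_iff t (ht x)
  simp only [isAdmissible_iff, comp_apply, Fin.succAbove_right_injective.of_comp_iff, ne_eq, hsucc]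

/-- `t` is a colour the new last vertex may take once the old colouring `b` has been shifted to
`t.succAbove ∘ b`, i.e. moved off `t`. -/
def IsAdmissibleInsertion (E : Fin (k + 1) → Fin (k + 1) → Prop) (b : Fin k → Fin r)
    (t : Fin (r + 1)) : Prop :=
  ∀ i, (t : ℕ) ≠ b i + 1 ∧ (E i.castSucc (Fin.last k) → (b i : ℕ) ≠ t)

lemma isAdmissible_snoc_succAbove_iff (E : Fin (k + 1) → Fin (k + 1) → Prop)
    (b : Fin k → Fin r) (t : Fin (r + 1)) :
    IsAdmissible E (Fin.snoc (t.succAbove ∘ b) t : Fin (k + 1) → Fin (r + 1)) ↔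
      IsAdmissible (E on Fin.castSucc) b ∧ IsAdmissibleInsertion E b t := by
  simp only [isAdmissible_snoc_iff, IsAdmissibleInsertion, comp_apply, ne_eq, Fin.succAbove_ne,
    not_false_eq_true, true_and, Fin.val_eq_succAbove_add_one_iff,
    Fin.val_succAbove_eq_add_one_iff]
  exact and_congr_left fun ht => isAdmissible_succAbove_comp_iff _ b t fun i => (ht i).1

lemma exists_snoc_succAbove_eq (a : Fin (k + 1) → Fin (r + 1)) (ha : Injective a) :
    ∃ (b : Fin k → Fin r) (t : Fin (r + 1)), Fin.snoc (t.succAbove ∘ b) t = a := by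
  choose b hb using fun i => Fin.exists_succAbove_eq
    (ha.ne (Fin.castSucc_lt_last i).ne : a i.castSucc ≠ a (Fin.last k))
  refine ⟨b, a (Fin.last k), ?_⟩
  conv_rhs => rw [← Fin.snoc_init_self a]
  congr 1
  exact funext hb

lemma card_isAdmissible_succ (E : Fin (k + 1) → Fin (k + 1) → Prop) :
    Nat.card {a : Fin (k + 1) → Fin (r + 1) // IsAdmissible E a} =
      Nat.card (Σ b : {b : Fin k → Fin r // IsAdmissible (E on Fin.castSucc) b},
        {t // IsAdmissibleInsertion E b.1 t}) := by
  refine (Nat.card_eq_of_bijective (fun p => ⟨Fin.snoc ((p.2 : Fin (r + 1)).succAbove ∘ p.1) p.2,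
    (isAdmissible_snoc_succAbove_iff E _ _).2 ⟨p.1.2, p.2.2⟩⟩) ⟨?_, ?_⟩).symm
  · rintro ⟨⟨b, hb⟩, ⟨t, ht⟩⟩ ⟨⟨b', hb'⟩, ⟨t', ht'⟩⟩ h
    have h' : (Fin.snoc (t.succAbove ∘ b) t : Fin (k + 1) → Fin (r + 1)) =
      Fin.snoc (t'.succAbove ∘ b') t' := congrArg Subtype.val h
    obtain ⟨hbb, rfl⟩ := Fin.snoc_injective2 h'
    obtain rfl := Fin.succAbove_right_injective.comp_left hbb
    rfl
  · rintro ⟨a, ha⟩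
    obtain ⟨b, t, rfl⟩ := exists_snoc_succAbove_eq a ha.injective
    obtain ⟨hb, ht⟩ := (isAdmissible_snoc_succAbove_iff E _ _).1 ha
    exact ⟨⟨⟨b, hb⟩, ⟨_, ht⟩⟩, rfl⟩

lemma card_isAdmissibleInsertion (E : Fin (k + 1) → Fin (k + 1) → Prop)
    (hE : ∀ i j l, i < j → j < l → E i l → E i j) {b : Fin k → Fin r}
    (hb : IsAdmissible (E on Fin.castSucc) b) :
    Nat.card {t // IsAdmissibleInsertion E b t} =
      r + 1 - (k + Nat.card {i : Fin k // E i.castSucc (Fin.last k)}) := by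
  classical
  have hdisj (i j : Fin k) (hi : E i.castSucc (Fin.last k)) : (b i : ℕ) ≠ b j + 1 := by
    rcases lt_trichotomy i j with hij | rfl | hji
    · exact hb.ne_succ hij
        (hE _ _ _ (Fin.castSucc_lt_castSucc_iff.2 hij) (Fin.castSucc_lt_last j) hi)
    · omega
    · exact hb.succ_ne hji
  set S := univ.filter fun i : Fin k => E i.castSucc (Fin.last k)
  set F := univ.image (Fin.succ ∘ b) ∪ S.image (Fin.castSucc ∘ b)
  have hF : univ.filter (IsAdmissibleInsertion E b) = Fᶜ := by
    ext t
    simp only [IsAdmissibleInsertion, ne_eq, eq_comm, forall_and, mem_filter, mem_univ, true_and,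
      compl_union, mem_inter, mem_compl, mem_image, comp_apply, Fin.ext_iff, Fin.val_succ,
      not_exists, Fin.val_castSucc, not_and, F, S]
  have hcard : F.card = k + S.card := by
    rw [card_union_of_disjoint, card_image_of_injective _ ((Fin.succ_injective _).comp hb.injective),
      card_image_of_injective _ ((Fin.castSucc_injective _).comp hb.injective), card_univ,
      Fintype.card_fin]
    simp only [disjoint_left, mem_image, mem_univ, comp_apply, Fin.ext_iff, Fin.val_succ, true_and,
      mem_filter, Fin.val_castSucc, not_exists, not_and, forall_exists_index, S]
    intro t i hi j hj h
    exact hdisj j i hj (by omega)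
  rw [Nat.card_eq_fintype_card, Fintype.card_subtype, hF, card_compl, hcard, Fintype.card_fin,
    Nat.card_eq_fintype_card, Fintype.card_subtype]

theorem card_isAdmissible (E : Fin k → Fin k → Prop)
    (hE : ∀ i j l, i < j → j < l → E i l → E i j) (q : ℕ) :
    Nat.card {κ : Fin k → Fin q // IsAdmissible E κ} =
      ∏ i, (q + 1 - k - Nat.card {j // j < i ∧ E j i}) := by
  induction k generalizing q with
  | zero =>
    have hall (κ : Fin 0 → Fin q) : IsAdmissible E κ :=
      ⟨fun i => i.elim0, fun i => i.elim0, fun i => i.elim0⟩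
    simp [Nat.card_congr (Equiv.subtypeUnivEquiv hall)]
  | succ k ih =>
    cases q with
    | zero =>
      rw [Nat.card_of_isEmpty, eq_comm]
      exact prod_eq_zero (mem_univ (Fin.last k)) (by omega)
    | succ r =>
      classical
      have hE' : ∀ i j l, i < j → j < l → (E on Fin.castSucc) i l → (E on Fin.castSucc) i j :=
        fun i j l hij hjl => hE _ _ _ (Fin.castSucc_lt_castSucc_iff.2 hij)
          (Fin.castSucc_lt_castSucc_iff.2 hjl)
      have hdeg (i : Fin k) : Nat.card {j // j < i.castSucc ∧ E j i.castSucc} =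
          Nat.card {j // j < i ∧ (E on Fin.castSucc) j i} := by
        rw [Fin.card_subtype_castSucc (by simp [(Fin.castSucc_lt_last i).not_gt])]
        simp only [Fin.castSucc_lt_castSucc_iff, onFun]
      have hdeg_last : Nat.card {j // j < Fin.last k ∧ E j (Fin.last k)} =
          Nat.card {j : Fin k // E j.castSucc (Fin.last k)} := by
        rw [Fin.card_subtype_castSucc (by simp)]
        simp only [Fin.castSucc_lt_last, true_and]
      rw [card_isAdmissible_succ, Nat.card_sigma,
        sum_congr rfl fun b _ => card_isAdmissibleInsertion E hE b.2, sum_const, card_univ,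
        ← Nat.card_eq_fintype_card, ih _ hE', Fin.prod_univ_castSucc, smul_eq_mul, hdeg_last]
      congr 1
      · exact prod_congr rfl fun i _ => by rw [hdeg]; omega
      · omega

theorem stmt_17_general (n k q : ℕ) (π : Fin k → Finset (Fin n))
    (hne : ∀ i, (π i).Nonempty)
    (hmin : ∀ i j : Fin k, i < j → (π i).min' (hne i) < (π j).min' (hne j))
    (overlap : Fin k → Fin k → Prop)
    (hoverlap : ∀ i j, overlap i j ↔
      ¬((π i).max' (hne i) < (π j).min' (hne j)) ∧
      ¬((π j).max' (hne j) < (π i).min' (hne i)))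
    (d : Fin k → ℕ)
    (hd : ∀ i, d i = Nat.card {j : Fin k // j < i ∧ overlap j i}) :
    Nat.card {κ : Fin k → Fin q // Function.Injective κ ∧
        ∀ i j : Fin k, i < j →
          ((κ j : ℤ) ≠ (κ i : ℤ) + 1 ∧ (overlap i j → (κ i : ℤ) ≠ (κ j : ℤ) + 1))} =
      ∏ i : Fin k, (q + 1 - k - d i) := by
  have hE (i j l : Fin k) (hij : i < j) (hjl : j < l) (hil : overlap i l) : overlap i j := by
    rw [hoverlap] at hil ⊢
    have hj : (π j).min' (hne j) ≤ (π j).max' (hne j) := (π j).min'_le _ ((π j).max'_mem _)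
    exact ⟨fun h => hil.1 (h.trans (hmin j l hjl)),
      fun h => (h.trans (hmin i j hij)).not_ge hj⟩
  rw [Nat.card_congr (Equiv.subtypeEquivRight fun κ => (isAdmissible_iff_int overlap κ).symm),
    card_isAdmissible overlap hE q]
  simp only [hd]

/-- Theorem SC: for a partition `π = {X₁,…,X_k}` of `[n]` with blocks indexed so that the
minima increase, `Γ_π` the overlap (interval) graph on `[k]`, and `d_i` the lower degrees,
the number of injections `κ : [k] → [q]` with `κ(j) ≠ κ(i)+1` for `i < j` and
`κ(i) ≠ κ(j)+1` for overlapping `i < j` equals `∏_{i=1}^k (q − k + 1 − d_i)`,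
for all `q ≥ k − 1 + max_i d_i`. -/
theorem stmt_17 (n k q : ℕ) (π : Fin k → Finset (Fin n))
    (hne : ∀ i, (π i).Nonempty)
    (hdisj : ∀ i j, i ≠ j → Disjoint (π i) (π j))
    (hcover : ∀ v : Fin n, ∃ i, v ∈ π i)
    (hmin : ∀ i j : Fin k, i < j → (π i).min' (hne i) < (π j).min' (hne j))
    (overlap : Fin k → Fin k → Prop)
    (hoverlap : ∀ i j, overlap i j ↔
      ¬((π i).max' (hne i) < (π j).min' (hne j)) ∧
      ¬((π j).max' (hne j) < (π i).min' (hne i)))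
    (d : Fin k → ℕ)
    (hd : ∀ i, d i = Nat.card {j : Fin k // j < i ∧ overlap j i})
    (hq : ∀ i, k - 1 + d i ≤ q) :
    Nat.card {κ : Fin k → Fin q // Function.Injective κ ∧
        ∀ i j : Fin k, i < j →
          ((κ j : ℤ) ≠ (κ i : ℤ) + 1 ∧ (overlap i j → (κ i : ℤ) ≠ (κ j : ℤ) + 1))} =
      ∏ i : Fin k, (q + 1 - k - d i) :=
  stmt_17_general n k q π hne hmin overlap hoverlap d hd
end

section
/- A sequence (d₁,…,d_k) of nonnegative integers is the vertex-order lower degree sequence of the overlap graph Γ_π of some partition π of [n] into k blocks if and only if: d₁ = 0, d_{i+1} ≤ d_i + 1 for all i ∈ [k−1], and n ≥ k + |{i ∈ [k−1] : d_{i+1} > d_i}| (the number of ascents). -/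
/-!
Necessity: if `i ⋖ j` (consecutive blocks), every block before `i` whose span reaches the least
element of `j` also reaches that of `i`, so `d j ≤ d i + 1`; and if `d i < d j` then block `i`
itself must reach block `j`, so it has two distinct extreme points. Disjointness then gives
`n ≥ k + #ascents`.

Sufficiency: read `0, 1, …` as a word of openings (least elements) and closings (greatest
elements of non-singleton blocks). Only ascent blocks receive a second element and they are
closed first in, first out; for `d i` of them to be open when block `i` opens, exactly
`#{ascents before i} - d i` closings must precede that opening. Surplus points go to the last
block.
-/

open Finset Function

theorem card_add_card_le_card_of_pairwiseDisjoint {ι β : Type*} [Fintype ι] [Fintype β]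
    [DecidableEq β] (π : ι → Finset β) (hdisj : Pairwise (Disjoint on π))
    (hne : ∀ i, (π i).Nonempty) (S : Finset ι) (hS : ∀ i ∈ S, 1 < #(π i)) :
    Fintype.card ι + #S ≤ Fintype.card β := by
  classical
  calc Fintype.card ι + #S = ∑ i, (1 + if i ∈ S then 1 else 0) := by
        rw [sum_add_distrib, sum_boole]; simp
    _ ≤ ∑ i, #(π i) := sum_le_sum fun i _ => by
        split_ifs with hi
        exacts [hS i hi, (hne i).card_pos]
    _ = #(univ.biUnion π) := (card_biUnion fun i _ j _ h => hdisj h).symm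
    _ ≤ Fintype.card β := card_le_univ _

theorem Fin.card_filter_val_lt_and {k m : ℕ} (hm : m ≤ k) (q : ℕ → Prop) [DecidablePred q] :
    #{j : Fin k | (j : ℕ) < m ∧ q j} = Nat.count q m := by
  rw [Nat.count_eq_card_filter_range, ← card_map Fin.valEmbedding]
  congr 1
  ext x
  simp only [mem_map, mem_filter, mem_univ, true_and, Fin.valEmbedding_apply, mem_range]
  exact ⟨by rintro ⟨j, hj, rfl⟩; exact hj, fun hx => ⟨⟨x, hx.1.trans_le hm⟩, hx, rfl⟩⟩

namespace Nat

variable {p : ℕ → Prop} [DecidablePred p]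

theorem exists_count_eq_of_lt_count {c n : ℕ} (h : c < count p n) :
    ∃ j < n, p j ∧ count p j = c := by
  induction n with
  | zero => simp at h
  | succ n ih =>
    rw [count_succ] at h
    by_cases hc : c < count p n
    · obtain ⟨j, hjn, hj⟩ := ih hc
      exact ⟨j, by omega, hj⟩
    · by_cases hp : p n
      · exact ⟨n, by omega, hp, by simp only [hp, if_true] at h; omega⟩
      · simp only [hp, if_false] at h; omega

theorem count_and_le_count (c n : ℕ) :
    count (fun j => p j ∧ c ≤ count p j) n = count p n - c := by
  induction n with
  | zero => simp
  | succ n ih =>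
    rw [count_succ, count_succ, ih]
    by_cases hp : p n <;> by_cases hc : c ≤ count p n <;> simp [hp, hc] <;> omega

end Nat

section Overlaps

variable {ι α : Type*} [Fintype ι] [LinearOrder ι] [LinearOrder α] {lo hi : ι → α} {i j : ι}

/-- With `lo`, `hi` the least and greatest elements of the blocks, the lower neighbours of `i`
in the overlap graph `Γ_π`; `d i` is its cardinality. -/
def lowerOverlaps (lo hi : ι → α) (i : ι) : Finset ι :=
  {j | j < i ∧ ¬hi j < lo i ∧ ¬hi i < lo j}

theorem mem_lowerOverlaps (hlo : StrictMono lo) (hle : ∀ i, lo i ≤ hi i) :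
    j ∈ lowerOverlaps lo hi i ↔ j < i ∧ lo i ≤ hi j := by
  simp only [lowerOverlaps, mem_filter, mem_univ, true_and, not_lt, and_congr_right_iff]
  exact fun hji => and_iff_left ((hlo hji).le.trans (hle i))

theorem lowerOverlaps_subset_insert (hlo : StrictMono lo) (hle : ∀ i, lo i ≤ hi i)
    (hij : i ⋖ j) : lowerOverlaps lo hi j ⊆ insert i (lowerOverlaps lo hi i) := by
  intro x hx
  rw [mem_lowerOverlaps hlo hle] at hx
  rw [mem_insert, mem_lowerOverlaps hlo hle]
  rcases (hij.le_of_lt hx.1).lt_or_eq with hxi | rfl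
  · exact Or.inr ⟨hxi, (hlo hij.lt).le.trans hx.2⟩
  · exact Or.inl rfl

theorem card_lowerOverlaps_le_succ (hlo : StrictMono lo) (hle : ∀ i, lo i ≤ hi i)
    (hij : i ⋖ j) : #(lowerOverlaps lo hi j) ≤ #(lowerOverlaps lo hi i) + 1 :=
  (card_le_card (lowerOverlaps_subset_insert hlo hle hij)).trans (card_insert_le _ _)

/-- At an ascent `i ⋖ j` the interval of `i` must reach that of `j`, so it is not a point. -/
theorem lo_lt_hi_of_card_lowerOverlaps_lt (hlo : StrictMono lo) (hle : ∀ i, lo i ≤ hi i)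
    (hij : i ⋖ j) (hcard : #(lowerOverlaps lo hi i) < #(lowerOverlaps lo hi j)) :
    lo i < hi i := by
  refine (hlo hij.lt).trans_le (not_lt.1 fun hij' => hcard.not_ge (card_le_card ?_))
  have hi : i ∉ lowerOverlaps lo hi j := by
    rw [mem_lowerOverlaps hlo hle]
    exact fun h => hij'.not_ge h.2
  exact (subset_insert_iff_of_notMem hi).1 (lowerOverlaps_subset_insert hlo hle hij)

theorem card_lowerOverlaps (lo hi : ι → α) (i : ι) :
    #(lowerOverlaps lo hi i) = Nat.card {j // j < i ∧ ¬hi j < lo i ∧ ¬hi i < lo j} := by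
  rw [Nat.card_eq_fintype_card, Fintype.card_subtype, lowerOverlaps]

theorem card_add_card_ascents_le [Fintype α] (π : ι → Finset α) (hne : ∀ i, (π i).Nonempty)
    (hdisj : Pairwise (Disjoint on π)) (hlo : StrictMono fun i => (π i).min' (hne i))
    (S : Finset ι) (hS : ∀ i ∈ S, ∃ j, i ⋖ j ∧
      #(lowerOverlaps (fun i => (π i).min' (hne i)) (fun i => (π i).max' (hne i)) i) <
        #(lowerOverlaps (fun i => (π i).min' (hne i)) (fun i => (π i).max' (hne i)) j)) :
    Fintype.card ι + #S ≤ Fintype.card α :=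
  card_add_card_le_card_of_pairwiseDisjoint π hdisj hne S fun i hi => by
    obtain ⟨j, hij, hlt⟩ := hS i hi
    refine one_lt_card.2 ⟨_, min'_mem _ (hne i), _, max'_mem _ (hne i), ?_⟩
    exact (lo_lt_hi_of_card_lowerOverlaps_lt hlo (fun i => min'_le _ _ (max'_mem _ _)) hij
      hlt).ne

end Overlaps

theorem lowerDegree_conditions {n k : ℕ} (hk : 0 < k) (π : Fin k → Finset (Fin n))
    (hne : ∀ i, (π i).Nonempty) (hdisj : Pairwise (Disjoint on π))
    (hlo : StrictMono fun i => (π i).min' (hne i)) (d : Fin k → ℕ)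
    (hd : ∀ i, d i =
      #(lowerOverlaps (fun i => (π i).min' (hne i)) (fun i => (π i).max' (hne i)) i)) :
    d ⟨0, hk⟩ = 0 ∧ (∀ i j : Fin k, (j : ℕ) = i + 1 → d j ≤ d i + 1) ∧
      k + Nat.card {i : Fin k // ∃ j : Fin k, (j : ℕ) = i + 1 ∧ d i < d j} ≤ n := by
  have hle : ∀ i, (π i).min' (hne i) ≤ (π i).max' (hne i) := fun i => min'_le _ _ (max'_mem _ _)
  refine ⟨?_, fun i j hij => ?_, ?_⟩
  · rw [hd, card_eq_zero, lowerOverlaps, filter_eq_empty_iff]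
    exact fun j _ h => Nat.not_lt_zero _ h.1
  · rw [hd, hd]
    exact card_lowerOverlaps_le_succ hlo hle (by simp [hij])
  · rw [Nat.card_eq_fintype_card, Fintype.card_subtype]
    simpa using card_add_card_ascents_le π hne hdisj hlo _ fun i hi => by
      obtain ⟨j, hij, hlt⟩ := (mem_filter.1 hi).2
      exact ⟨j, by simp [hij], by rwa [← hd, ← hd]⟩

section Merge

variable {k : ℕ} {b : ℕ → ℕ}

/-- Interleave `k` openings with a run of closings so that exactly `b i` closings precede the
`i`-th opening: the `i`-th opening lands at `openPos b i`, the `c`-th closing at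
`closePos k b c`. -/
def openPos (b : ℕ → ℕ) (i : ℕ) : ℕ := i + b i

def closePos (k : ℕ) (b : ℕ → ℕ) (c : ℕ) : ℕ := c + #{i ∈ range k | b i ≤ c}

theorem lt_card_filter_le_iff (hb : MonotoneOn b (Set.Iio k)) {i : ℕ} (hi : i < k) (c : ℕ) :
    i < #{j ∈ range k | b j ≤ c} ↔ b i ≤ c := by
  constructor
  · intro h
    by_contra! hc
    refine h.not_ge ((card_le_card fun j hj => ?_).trans (card_range i).le)
    simp only [mem_filter, mem_range] at hj ⊢
    by_contra! hij
    exact (hc.trans_le (hb hi hj.1 hij)).not_ge hj.2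
  · intro hc
    calc i < #(range (i + 1)) := by simp
      _ ≤ _ := card_le_card fun j hj => by
        simp only [mem_filter, mem_range] at hj ⊢
        exact ⟨by omega, (hb (by simp; omega) hi (by omega)).trans hc⟩

theorem openPos_lt_closePos_iff (hb : MonotoneOn b (Set.Iio k)) {i : ℕ} (hi : i < k) (c : ℕ) :
    openPos b i < closePos k b c ↔ b i ≤ c := by
  have := lt_card_filter_le_iff hb hi c
  unfold openPos closePos
  omega

theorem openPos_ne_closePos (hb : MonotoneOn b (Set.Iio k)) {i : ℕ} (hi : i < k) (c : ℕ) :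
    openPos b i ≠ closePos k b c := by
  have := lt_card_filter_le_iff hb hi c
  unfold openPos closePos
  omega

theorem openPos_strictMonoOn (hb : MonotoneOn b (Set.Iio k)) :
    StrictMonoOn (openPos b) (Set.Iio k) :=
  fun _ hi _ hj hij => Nat.add_lt_add_of_lt_of_le hij (hb hi hj hij.le)

theorem closePos_strictMono : StrictMono (closePos k b) := fun _ _ hcc' =>
  Nat.add_lt_add_of_lt_of_le hcc'
    (card_le_card (monotone_filter_right _ fun _ _ h => h.trans hcc'.le))

theorem image_openPos_union_image_closePos (hb : MonotoneOn b (Set.Iio k)) {m : ℕ}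
    (hm : ∀ i < k, b i ≤ m) :
    (range k).image (openPos b) ∪ (range m).image (closePos k b) = range (k + m) := by
  refine eq_of_subset_of_card_le (fun v hv => ?_) ?_
  · simp only [mem_union, mem_image, mem_range] at hv ⊢
    rcases hv with ⟨i, hi, rfl⟩ | ⟨c, hc, rfl⟩
    · have := hm i hi
      unfold openPos; omega
    · have := card_filter_le (range k) (fun i => b i ≤ c)
      rw [card_range] at this
      unfold closePos; omega
  · rw [card_union_of_disjoint, card_image_of_injOn, card_image_of_injOn, card_range, card_range,
      card_range]
    · exact closePos_strictMono.injective.injOn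
    · exact (openPos_strictMonoOn hb).injOn.mono (by simp)
    · simp only [disjoint_left, mem_image, mem_range]
      rintro _ ⟨i, hi, rfl⟩ ⟨c, -, hc⟩
      exact openPos_ne_closePos hb hi c hc.symm

end Merge

section Realization

open Nat

variable {n k : ℕ} {D : ℕ → ℕ}

def IsAscent (k : ℕ) (D : ℕ → ℕ) (i : ℕ) : Prop := i + 1 < k ∧ D i < D (i + 1)

instance : DecidablePred (IsAscent k D) := fun _ => inferInstanceAs (Decidable (_ ∧ _))

/-- When block `i` opens, the `count (IsAscent k D) i` earlier ascent blocks have all been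
opened and `D i` of them are still open; the others have been closed. -/
def closedBefore (k : ℕ) (D : ℕ → ℕ) (i : ℕ) : ℕ := count (IsAscent k D) i - D i

theorem le_count_isAscent (hD0 : D 0 = 0) (hstep : ∀ i, i + 1 < k → D (i + 1) ≤ D i + 1) :
    ∀ i < k, D i ≤ count (IsAscent k D) i := by
  intro i
  induction i with
  | zero => simp [hD0]
  | succ i ih =>
    intro hi
    have := ih (by omega)
    have := hstep i hi
    rw [count_succ]
    by_cases hasc : IsAscent k D i
    · simp only [hasc, if_true]; omega
    · simp only [hasc, if_false]; unfold IsAscent at hasc; omega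

theorem closedBefore_monotoneOn (hstep : ∀ i, i + 1 < k → D (i + 1) ≤ D i + 1) :
    MonotoneOn (closedBefore k D) (Set.Iio k) := by
  refine monotoneOn_of_le_succ Set.ordConnected_Iio fun i _ _ hi => ?_
  simp only [Order.succ_eq_add_one, Set.mem_Iio] at hi ⊢
  have := hstep i hi
  unfold closedBefore
  rw [count_succ]
  by_cases hasc : IsAscent k D i
  · simp only [hasc, if_true]; unfold IsAscent at hasc; omega
  · simp only [hasc, if_false]; unfold IsAscent at hasc; omega

/-- Block `i` opens at `openPos`; an ascent block is closed by the closing whose rank is its rank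
among the ascents (first in, first out), and the last block absorbs the surplus positions. -/
def block (n k : ℕ) (D : ℕ → ℕ) (i : Fin k) : Finset (Fin n) :=
  {v | (v : ℕ) = openPos (closedBefore k D) i ∨
    IsAscent k D i ∧ (v : ℕ) = closePos k (closedBefore k D) (count (IsAscent k D) i) ∨
    (i : ℕ) + 1 = k ∧ k + count (IsAscent k D) k ≤ v}

theorem mem_block {i : Fin k} {v : Fin n} :
    v ∈ block n k D i ↔ (v : ℕ) = openPos (closedBefore k D) i ∨
      IsAscent k D i ∧ (v : ℕ) = closePos k (closedBefore k D) (count (IsAscent k D) i) ∨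
      (i : ℕ) + 1 = k ∧ k + count (IsAscent k D) k ≤ v := by
  simp [block]

theorem openPos_closedBefore_lt {i : ℕ} (hi : i < k) :
    openPos (closedBefore k D) i < k + count (IsAscent k D) k := by
  have := count_monotone (IsAscent k D) hi.le
  unfold openPos closedBefore
  omega

theorem closePos_count_lt {j : ℕ} (hj : IsAscent k D j) :
    closePos k (closedBefore k D) (count (IsAscent k D) j) < k + count (IsAscent k D) k := by
  have := count_strict_mono hj (by unfold IsAscent at hj; omega : j < k)
  have := card_filter_le (range k) (fun i => closedBefore k D i ≤ count (IsAscent k D) j)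
  rw [card_range] at this
  unfold closePos
  omega

theorem openPos_lt_closePos_count (hstep : ∀ i, i + 1 < k → D (i + 1) ≤ D i + 1) {i : ℕ}
    (hi : i < k) :
    openPos (closedBefore k D) i < closePos k (closedBefore k D) (count (IsAscent k D) i) :=
  (openPos_lt_closePos_iff (closedBefore_monotoneOn hstep) hi _).2 (Nat.sub_le _ _)

theorem openPos_mem_block (hn : k + count (IsAscent k D) k ≤ n) (i : Fin k) :
    (⟨openPos (closedBefore k D) i, (openPos_closedBefore_lt i.2).trans_le hn⟩ : Fin n) ∈
      block n k D i :=
  mem_block.2 (Or.inl rfl)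

theorem block_nonempty (hn : k + count (IsAscent k D) k ≤ n) (i : Fin k) :
    (block n k D i).Nonempty :=
  ⟨_, openPos_mem_block hn i⟩

theorem val_min'_block (hstep : ∀ i, i + 1 < k → D (i + 1) ≤ D i + 1)
    (hn : k + count (IsAscent k D) k ≤ n) {i : Fin k} (h : (block n k D i).Nonempty) :
    ((block n k D i).min' h : ℕ) = openPos (closedBefore k D) i := by
  refine congrArg Fin.val ((isLeast_min' _ h).unique ⟨openPos_mem_block hn i, fun v hv => ?_⟩)
  have := openPos_closedBefore_lt (D := D) i.2
  have := openPos_lt_closePos_count hstep i.2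
  rw [Fin.le_def]
  rcases mem_block.1 hv with h | ⟨-, h⟩ | ⟨-, h⟩ <;> dsimp only <;> omega

theorem val_max'_block_of_isAscent (hstep : ∀ i, i + 1 < k → D (i + 1) ≤ D i + 1)
    (hn : k + count (IsAscent k D) k ≤ n) {i : Fin k} (hi : IsAscent k D i)
    (h : (block n k D i).Nonempty) :
    ((block n k D i).max' h : ℕ) = closePos k (closedBefore k D) (count (IsAscent k D) i) := by
  have hmem : (⟨_, (closePos_count_lt hi).trans_le hn⟩ : Fin n) ∈ block n k D i :=
    mem_block.2 (Or.inr (Or.inl ⟨hi, rfl⟩))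
  refine congrArg Fin.val ((isGreatest_max' _ h).unique ⟨hmem, fun v hv => ?_⟩)
  have := openPos_lt_closePos_count hstep i.2
  have := hi.1
  rw [Fin.le_def]
  rcases mem_block.1 hv with h | ⟨-, h⟩ | ⟨h', -⟩ <;> dsimp only <;> omega

theorem val_max'_block_of_not_isAscent (hn : k + count (IsAscent k D) k ≤ n) {i : Fin k}
    (hi : ¬IsAscent k D i) (hlast : (i : ℕ) + 1 ≠ k) (h : (block n k D i).Nonempty) :
    ((block n k D i).max' h : ℕ) = openPos (closedBefore k D) i := by
  refine congrArg Fin.val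
    ((isGreatest_max' _ h).unique ⟨openPos_mem_block hn i, fun v hv => ?_⟩)
  rw [Fin.le_def]
  rcases mem_block.1 hv with h | ⟨h', -⟩ | ⟨h', -⟩
  exacts [h.le, (hi h').elim, (hlast h').elim]

theorem eq_of_mem_block_of_mem_block (hstep : ∀ i, i + 1 < k → D (i + 1) ≤ D i + 1)
    {i j : Fin k} {v : Fin n} (hi : v ∈ block n k D i) (hj : v ∈ block n k D j) : i = j := by
  have hb := closedBefore_monotoneOn hstep
  have hoi := openPos_closedBefore_lt (D := D) i.2
  have hoj := openPos_closedBefore_lt (D := D) j.2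
  rcases mem_block.1 hi with h | ⟨ha, h⟩ | ⟨hl, h⟩ <;>
    rcases mem_block.1 hj with h' | ⟨ha', h'⟩ | ⟨hl', h'⟩
  · exact Fin.ext ((openPos_strictMonoOn hb).injOn i.2 j.2 (h.symm.trans h'))
  · exact (openPos_ne_closePos hb i.2 _ (h.symm.trans h')).elim
  · omega
  · exact (openPos_ne_closePos hb j.2 _ (h'.symm.trans h)).elim
  · exact Fin.ext (count_injective ha ha' (closePos_strictMono.injective (h.symm.trans h')))
  · have := closePos_count_lt ha; omega
  · omega
  · have := closePos_count_lt ha'; omega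
  · exact Fin.ext (by omega)

theorem exists_mem_block (hk : 0 < k) (hstep : ∀ i, i + 1 < k → D (i + 1) ≤ D i + 1)
    (v : Fin n) : ∃ i, v ∈ block n k D i := by
  by_cases hv : (v : ℕ) < k + count (IsAscent k D) k
  · have hb := closedBefore_monotoneOn hstep
    have hle : ∀ i < k, closedBefore k D i ≤ count (IsAscent k D) k :=
      fun i hi => (Nat.sub_le _ _).trans (count_monotone _ hi.le)
    rw [← mem_range, ← image_openPos_union_image_closePos hb hle] at hv
    simp only [mem_union, mem_image, mem_range] at hv
    rcases hv with ⟨i, hi, hiv⟩ | ⟨c, hc, hcv⟩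
    · exact ⟨⟨i, hi⟩, mem_block.2 (Or.inl hiv.symm)⟩
    · obtain ⟨j, hjk, hj, rfl⟩ := exists_count_eq_of_lt_count hc
      exact ⟨⟨j, hjk⟩, mem_block.2 (Or.inr (Or.inl ⟨hj, hcv.symm⟩))⟩
  · exact ⟨⟨k - 1, by omega⟩, mem_block.2 (Or.inr (Or.inr ⟨by simp; omega, by omega⟩))⟩

theorem strictMono_min'_block (hstep : ∀ i, i + 1 < k → D (i + 1) ≤ D i + 1)
    (hn : k + count (IsAscent k D) k ≤ n) (hne : ∀ i, (block n k D i).Nonempty) :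
    StrictMono fun i => (block n k D i).min' (hne i) := fun i j hij => by
  rw [Fin.lt_def, val_min'_block hstep hn, val_min'_block hstep hn]
  exact openPos_strictMonoOn (closedBefore_monotoneOn hstep) i.2 j.2 hij

theorem card_lowerOverlaps_block (hD0 : D 0 = 0) (hstep : ∀ i, i + 1 < k → D (i + 1) ≤ D i + 1)
    (hn : k + count (IsAscent k D) k ≤ n) (hne : ∀ i, (block n k D i).Nonempty) (i : Fin k) :
    #(lowerOverlaps (fun i => (block n k D i).min' (hne i))
      (fun i => (block n k D i).max' (hne i)) i) = D i := by
  have hlo := strictMono_min'_block hstep hn hne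
  have hle : ∀ i, (block n k D i).min' (hne i) ≤ (block n k D i).max' (hne i) :=
    fun i => min'_le _ _ (max'_mem _ _)
  have hL : lowerOverlaps (fun i => (block n k D i).min' (hne i))
      (fun i => (block n k D i).max' (hne i)) i =
      ({j | (j : ℕ) < i ∧ IsAscent k D j ∧ closedBefore k D i ≤ count (IsAscent k D) j} :
        Finset (Fin k)) := by
    ext j
    rw [mem_lowerOverlaps hlo hle, mem_filter, Fin.lt_def, Fin.le_def, val_min'_block hstep hn]
    by_cases hji : (j : ℕ) < i
    · by_cases hj : IsAscent k D j
      · rw [val_max'_block_of_isAscent hstep hn hj, (openPos_ne_closePos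
          (closedBefore_monotoneOn hstep) i.2 _).le_iff_lt, openPos_lt_closePos_iff
          (closedBefore_monotoneOn hstep) i.2]
        simp [hji, hj]
      · rw [val_max'_block_of_not_isAscent hn hj (by omega)]
        simpa [hj, hji] using openPos_strictMonoOn (closedBefore_monotoneOn hstep) j.2 i.2 hji
    · simp [hji]
  rw [hL, Fin.card_filter_val_lt_and i.2.le
    (fun j => IsAscent k D j ∧ closedBefore k D i ≤ count (IsAscent k D) j), count_and_le_count,
    closedBefore]
  have := le_count_isAscent hD0 hstep i i.2
  omega

theorem exists_blocks_card_lowerOverlaps (hk : 0 < k) (hD0 : D 0 = 0)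
    (hstep : ∀ i, i + 1 < k → D (i + 1) ≤ D i + 1) (hn : k + count (IsAscent k D) k ≤ n) :
    ∃ (π : Fin k → Finset (Fin n)) (hne : ∀ i, (π i).Nonempty),
      Pairwise (Disjoint on π) ∧ (∀ v, ∃ i, v ∈ π i) ∧
      StrictMono (fun i => (π i).min' (hne i)) ∧
      ∀ i, #(lowerOverlaps (fun i => (π i).min' (hne i)) (fun i => (π i).max' (hne i)) i) =
        D i :=
  ⟨block n k D, block_nonempty hn,
    fun _ _ hij => disjoint_left.2 fun _ hi hj => hij (eq_of_mem_block_of_mem_block hstep hi hj),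
    exists_mem_block hk hstep, strictMono_min'_block hstep hn _,
    card_lowerOverlaps_block hD0 hstep hn _⟩

end Realization

def zeroExtend {k : ℕ} (d : Fin k → ℕ) (i : ℕ) : ℕ := if h : i < k then d ⟨i, h⟩ else 0

section ZeroExtend

variable {k : ℕ} {d : Fin k → ℕ}

theorem zeroExtend_val (i : Fin k) : zeroExtend d i = d i := dif_pos i.2

theorem zeroExtend_succ_le (hstep : ∀ i j : Fin k, (j : ℕ) = i + 1 → d j ≤ d i + 1) (i : ℕ)
    (hi : i + 1 < k) : zeroExtend d (i + 1) ≤ zeroExtend d i + 1 := by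
  have := hstep ⟨i, by omega⟩ ⟨i + 1, hi⟩ rfl
  rwa [← zeroExtend_val (d := d), ← zeroExtend_val (d := d)] at this

theorem isAscent_zeroExtend_iff (i : Fin k) :
    IsAscent k (zeroExtend d) i ↔ ∃ j : Fin k, (j : ℕ) = i + 1 ∧ d i < d j := by
  refine ⟨fun ⟨hi, hlt⟩ => ⟨⟨i + 1, hi⟩, rfl, ?_⟩, fun ⟨j, hj, hlt⟩ => ?_⟩
  · rwa [← zeroExtend_val (d := d), ← zeroExtend_val (d := d) ⟨i + 1, hi⟩]
  · have hdj := zeroExtend_val (d := d) j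
    rw [hj] at hdj
    exact ⟨hj ▸ j.2, by rwa [zeroExtend_val, hdj]⟩

theorem count_isAscent_zeroExtend :
    Nat.count (IsAscent k (zeroExtend d)) k =
      Nat.card {i : Fin k // ∃ j : Fin k, (j : ℕ) = i + 1 ∧ d i < d j} := by
  rw [Nat.card_eq_fintype_card, Fintype.card_subtype,
    ← Fin.card_filter_val_lt_and le_rfl (IsAscent k (zeroExtend d))]
  simp only [isAscent_zeroExtend_iff, Fin.is_lt, true_and]

end ZeroExtend

/-- Proposition: a sequence `(d₁,…,d_k)` of nonnegative integers is the vertex-order lower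
degree sequence of the overlap graph `Γ_π` of some partition `π` of `[n]` into `k` blocks
(ordered by least element) iff `d₁ = 0`, `d_{i+1} ≤ d_i + 1` for all `i`, and
`n ≥ k +` the number of ascents of the sequence. -/
theorem stmt_18 (n k : ℕ) (hk : 1 ≤ k) (d : Fin k → ℕ) :
    (∃ (π : Fin k → Finset (Fin n)) (hne : ∀ i, (π i).Nonempty),
      (∀ i j, i ≠ j → Disjoint (π i) (π j)) ∧ (∀ v : Fin n, ∃ i, v ∈ π i) ∧
      (∀ i j : Fin k, i < j → (π i).min' (hne i) < (π j).min' (hne j)) ∧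
      (∀ i : Fin k, d i = Nat.card {j : Fin k // j < i ∧
        ¬((π j).max' (hne j) < (π i).min' (hne i)) ∧
        ¬((π i).max' (hne i) < (π j).min' (hne j))})) ↔
    (d ⟨0, hk⟩ = 0 ∧
      (∀ i j : Fin k, (j : ℕ) = (i : ℕ) + 1 → d j ≤ d i + 1) ∧
      k + Nat.card {i : Fin k // ∃ j : Fin k, (j : ℕ) = (i : ℕ) + 1 ∧ d i < d j} ≤ n) := by
  constructor
  · rintro ⟨π, hne, hdisj, -, hmono, hdeg⟩
    exact lowerDegree_conditions hk π hne (fun i j => hdisj i j) (fun i j => hmono i j) d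
      fun i => (hdeg i).trans
        (card_lowerOverlaps (fun i => (π i).min' (hne i)) (fun i => (π i).max' (hne i)) i).symm
  · rintro ⟨h0, hstep, hn⟩
    obtain ⟨π, hne, hdisj, hcover, hlo, hdeg⟩ :=
      exists_blocks_card_lowerOverlaps (n := n) hk (by rwa [zeroExtend_val ⟨0, hk⟩])
        (zeroExtend_succ_le hstep) (by rwa [count_isAscent_zeroExtend])
    refine ⟨π, hne, fun i j hij => hdisj hij, hcover, fun i j hij => hlo hij, fun i => ?_⟩
    rw [← zeroExtend_val (d := d), ← hdeg, card_lowerOverlaps]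
end

section
/- For any gain graph Φ with finite gain group 𝔊 and underlying graph Γ, the total chromatic polynomial satisfies χ̃_Φ(q,z) = ∑_{W ⊆ V} χ_{Γ|W^c}(z) · χ*_{Φ|W}(q − z), where χ is the ordinary chromatic polynomial of the induced subgraph of Γ on W^c and χ* is the zero-free chromatic polynomial of the induced gain subgraph on W. -/
variable {𝔊 : Type} [Group 𝔊]

open Classical in
/-- The induced gain subgraph on a set `W` of vertices. -/
noncomputable def GG.induce (Φ : GG 𝔊) (W : Finset Φ.V) : GG 𝔊 where
  V := {v : Φ.V // v ∈ W}
  E := {e : Φ.E // Φ.src e ∈ W ∧ Φ.tgt e ∈ W}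
  fV := inferInstance
  fE := inferInstance
  src := fun e => ⟨Φ.src e.1, e.2.1⟩
  tgt := fun e => ⟨Φ.tgt e.1, e.2.2⟩
  gain := fun e => Φ.gain e.1

/-- The chromatic polynomial of the underlying (ordinary) graph of `Φ`, via Whitney's
subset expansion `χ_Γ(z) = ∑_{S ⊆ E} (−1)^{|S|} z^{c(S)}`. -/
noncomputable def GG.underlyingChrom (Φ : GG 𝔊) (z : ℤ) : ℤ :=
  ∑ S : Finset Φ.E, (-1) ^ S.card * z ^ Φ.c S

/-- The zero-free chromatic polynomial `χ*_Φ(q) = χ̃_Φ(q, 0)`. -/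
noncomputable def GG.chiStar (Φ : GG 𝔊) (q : ℤ) : ℤ := Φ.chiTotal q 0

/-!
Write `q ^ b(S) = ((q - z) + z) ^ b(S)` and expand: the term of `S` becomes a sum over sets `T`
of balanced components of `(V, S)` of `(q - z) ^ |T| * z ^ (c(S) - |T|)`. Let `W` be the union of
the components in `T`. Since no edge of `S` leaves `W`, the edge set `S` is the disjoint union of
an edge set `A` of `Γ|Wᶜ` and a balanced edge set `B` of `Φ|W`, with `|T| = c(B)` and
`c(S) - |T| = c(A)`; conversely every such pair `(A, B)` arises from exactly one `(S, T)`.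
Summing over `W` first therefore gives `χ_{Γ|Wᶜ}(z) · χ*_{Φ|W}(q - z)`, because in
`χ*_{Φ|W}(q - z) = χ̃_{Φ|W}(q - z, 0)` the factor `0 ^ (c(B) - b(B))` keeps exactly the balanced
`B`.
-/

open Classical SimpleGraph Finset

namespace SimpleGraph

variable {V : Type*} {G : SimpleGraph V} {s : Set V}

lemma Reachable.mem_of_adj_closed (hs : ∀ ⦃u v⦄, G.Adj u v → u ∈ s → v ∈ s) {u v : V}
    (h : G.Reachable u v) (hu : u ∈ s) : v ∈ s := by
  obtain ⟨p⟩ := h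
  induction p with
  | nil => exact hu
  | cons hadj _ ih => exact ih (hs hadj hu)

lemma reachable_induce_iff_of_adj_closed (hs : ∀ ⦃u v⦄, G.Adj u v → u ∈ s → v ∈ s)
    {u v : s} : (G.induce s).Reachable u v ↔ G.Reachable u v := by
  refine ⟨fun h => h.map (Embedding.induce s).toHom, fun ⟨p⟩ => ?_⟩
  have hsupp : ∀ x ∈ p.support, x ∈ s := fun x hx =>
    (p.takeUntil x hx).reachable.mem_of_adj_closed hs u.2
  exact (p.induce s hsupp).reachable

lemma card_connectedComponent_induce_of_adj_closed
    (hs : ∀ ⦃u v⦄, G.Adj u v → u ∈ s → v ∈ s) :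
    Nat.card (G.induce s).ConnectedComponent = Nat.card (G.connectedComponentMk '' s) := by
  set f := ConnectedComponent.map (Embedding.induce s).toHom
  have hf : Function.Injective f := by
    refine ConnectedComponent.ind₂ fun a b hab => ?_
    rw [ConnectedComponent.eq, reachable_induce_iff_of_adj_closed hs]
    exact ConnectedComponent.eq.1 hab
  have hrange : Set.range f = G.connectedComponentMk '' s := by
    ext C
    constructor
    · rintro ⟨c, rfl⟩
      induction c using ConnectedComponent.ind with
      | h a => exact ⟨a.1, a.2, rfl⟩
    · rintro ⟨v, hv, rfl⟩
      exact ⟨(G.induce s).connectedComponentMk ⟨v, hv⟩, rfl⟩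
  rw [← hrange, Nat.card_range_of_injective hf]

lemma image_connectedComponentMk_compl_of_adj_closed
    (hs : ∀ ⦃u v⦄, G.Adj u v → u ∈ s → v ∈ s) :
    G.connectedComponentMk '' sᶜ = (G.connectedComponentMk '' s)ᶜ := by
  ext C
  induction C using ConnectedComponent.ind with
  | h v =>
    simp only [Set.mem_image, Set.mem_compl_iff, ConnectedComponent.eq, not_exists, not_and]
    constructor
    · rintro ⟨u, hu, huv⟩ w hw hwv
      exact hu ((hwv.trans huv.symm).mem_of_adj_closed hs hw)
    · intro h
      exact ⟨v, fun hv => h v hv (Reachable.refl v), Reachable.refl v⟩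

lemma card_connectedComponent_eq_add_of_adj_closed [Finite V]
    (hs : ∀ ⦃u v⦄, G.Adj u v → u ∈ s → v ∈ s) :
    Nat.card G.ConnectedComponent =
      Nat.card (G.induce s).ConnectedComponent + Nat.card (G.induce sᶜ).ConnectedComponent := by
  have hsc : ∀ ⦃u v⦄, G.Adj u v → u ∈ sᶜ → v ∈ sᶜ := fun _ _ h hu hv => hu (hs h.symm hv)
  rw [card_connectedComponent_induce_of_adj_closed hs,
    card_connectedComponent_induce_of_adj_closed hsc,
    image_connectedComponentMk_compl_of_adj_closed hs, Nat.card_coe_set_eq,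
    Nat.card_coe_set_eq, Set.ncard_add_ncard_compl]

end SimpleGraph

lemma Finset.sum_powerset_pow_mul_pow_sub {ι R : Type*} [CommSemiring R] (s : Finset ι)
    {n : ℕ} (hn : #s ≤ n) (a b : R) :
    ∑ t ∈ s.powerset, a ^ #t * b ^ (n - #t) = (a + b) ^ #s * b ^ (n - #s) := by
  rw [← sum_pow_mul_eq_add_pow, sum_mul]
  refine sum_congr rfl fun t ht => ?_
  have hts : #t ≤ #s := card_le_card (mem_powerset.1 ht)
  rw [mul_assoc, ← pow_add, add_comm, tsub_add_tsub_cancel hn hts]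

namespace GG

variable {Φ : GG 𝔊} {S : Finset Φ.E} {W : Finset Φ.V}

lemma compGraph_adj {a b : Φ.V} :
    (Φ.compGraph S).Adj a b ↔ a ≠ b ∧
      ((∃ e ∈ S, Φ.src e = a ∧ Φ.tgt e = b) ∨ (∃ e ∈ S, Φ.src e = b ∧ Φ.tgt e = a)) := by
  simp [compGraph, SimpleGraph.fromRel_adj]

lemma connectedComponentMk_src_eq_tgt {e : Φ.E} (he : e ∈ S) :
    (Φ.compGraph S).connectedComponentMk (Φ.src e) =
      (Φ.compGraph S).connectedComponentMk (Φ.tgt e) := by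
  by_cases h : Φ.src e = Φ.tgt e
  · rw [h]
  · exact ConnectedComponent.sound (compGraph_adj.2 ⟨h, Or.inl ⟨e, he, rfl, rfl⟩⟩).reachable

lemma b_eq_card_filter (S : Finset Φ.E) :
    Φ.b S = #(univ.filter (Φ.BalancedComp S)) := by
  rw [GG.b, Nat.card_eq_fintype_card, Fintype.card_subtype]

lemma c_eq_card_univ (S : Finset Φ.E) :
    Φ.c S = #(univ : Finset (Φ.compGraph S).ConnectedComponent) := by
  rw [GG.c, Nat.card_eq_fintype_card, card_univ]

lemma b_le_c (S : Finset Φ.E) : Φ.b S ≤ Φ.c S := by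
  rw [b_eq_card_filter, c_eq_card_univ]
  exact card_filter_le _ _

def IsBalanced (Φ : GG 𝔊) (S : Finset Φ.E) : Prop := ∀ C, Φ.BalancedComp S C

lemma b_eq_c_iff : Φ.b S = Φ.c S ↔ Φ.IsBalanced S := by
  rw [b_eq_card_filter, c_eq_card_univ, card_filter_eq_iff]
  simp [IsBalanced]

lemma chiStar_eq_sum_isBalanced (Φ : GG 𝔊) (q : ℤ) :
    Φ.chiStar q = ∑ B ∈ univ.filter Φ.IsBalanced, (-1) ^ #B * q ^ Φ.c B := by
  rw [chiStar, chiTotal, sum_filter]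
  refine sum_congr rfl fun B _ => ?_
  by_cases h : Φ.IsBalanced B
  · rw [if_pos h, b_eq_c_iff.2 h, Nat.sub_self, pow_zero, mul_one]
  · have hlt : Φ.b B < Φ.c B := (b_le_c B).lt_of_ne (mt b_eq_c_iff.1 h)
    rw [if_neg h, zero_pow (Nat.sub_pos_of_lt hlt).ne', mul_zero]

noncomputable def restrictEdges (Φ : GG 𝔊) (W : Finset Φ.V) (S : Finset Φ.E) :
    Finset (Φ.induce W).E :=
  univ.filter fun e => e.1 ∈ S

@[simp] lemma mem_restrictEdges {e : (Φ.induce W).E} : e ∈ Φ.restrictEdges W S ↔ e.1 ∈ S := by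
  simp [restrictEdges]

noncomputable def compGraphInduceIso :
    (Φ.induce W).compGraph (Φ.restrictEdges W S) ≃g (Φ.compGraph S).induce (W : Set Φ.V) where
  toEquiv := Equiv.refl _
  map_rel_iff' {a b} := by
    change (Φ.compGraph S).Adj a.1 b.1 ↔ _
    rw [compGraph_adj, compGraph_adj]
    constructor
    · rintro ⟨hne, (⟨e, he, hs, ht⟩ | ⟨e, he, hs, ht⟩)⟩
      · exact ⟨fun h => hne (congrArg Subtype.val h),
          Or.inl ⟨⟨e, hs ▸ a.2, ht ▸ b.2⟩, mem_restrictEdges.2 he, Subtype.ext hs, Subtype.ext ht⟩⟩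
      · exact ⟨fun h => hne (congrArg Subtype.val h),
          Or.inr ⟨⟨e, hs ▸ b.2, ht ▸ a.2⟩, mem_restrictEdges.2 he, Subtype.ext hs, Subtype.ext ht⟩⟩
    · rintro ⟨hne, (⟨e, he, rfl, rfl⟩ | ⟨e, he, rfl, rfl⟩)⟩
      · exact ⟨fun h => hne (Subtype.ext h), Or.inl ⟨e.1, mem_restrictEdges.1 he, rfl, rfl⟩⟩
      · exact ⟨fun h => hne (Subtype.ext h), Or.inr ⟨e.1, mem_restrictEdges.1 he, rfl, rfl⟩⟩

def NoCross (Φ : GG 𝔊) (S : Finset Φ.E) (W : Finset Φ.V) : Prop :=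
  ∀ e ∈ S, Φ.src e ∈ W ↔ Φ.tgt e ∈ W

lemma NoCross.adj_mem (hcr : Φ.NoCross S W) ⦃u v : Φ.V⦄ (h : (Φ.compGraph S).Adj u v)
    (hu : u ∈ (W : Set Φ.V)) : v ∈ (W : Set Φ.V) := by
  rcases (compGraph_adj.1 h).2 with ⟨e, he, rfl, rfl⟩ | ⟨e, he, rfl, rfl⟩
  · exact (hcr e he).1 hu
  · exact (hcr e he).2 hu

lemma NoCross.reachable_induce_iff (hcr : Φ.NoCross S W) {a b : (Φ.induce W).V} :
    ((Φ.induce W).compGraph (Φ.restrictEdges W S)).Reachable a b ↔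
      (Φ.compGraph S).Reachable a.1 b.1 :=
  compGraphInduceIso.reachable_iff.symm.trans (reachable_induce_iff_of_adj_closed hcr.adj_mem)

lemma NoCross.c_induce_eq_card_image (hcr : Φ.NoCross S W) :
    (Φ.induce W).c (Φ.restrictEdges W S) = #(W.image (Φ.compGraph S).connectedComponentMk) := by
  rw [GG.c, Nat.card_congr compGraphInduceIso.connectedComponentEquiv,
    card_connectedComponent_induce_of_adj_closed hcr.adj_mem, ← coe_image,
    Nat.card_coe_set_eq, Set.ncard_coe_finset]

lemma NoCross.c_eq_add (hcr : Φ.NoCross S W) :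
    Φ.c S = (Φ.induce W).c (Φ.restrictEdges W S) + (Φ.induce Wᶜ).c (Φ.restrictEdges Wᶜ S) := by
  rw [GG.c, GG.c, GG.c, Nat.card_congr compGraphInduceIso.connectedComponentEquiv,
    Nat.card_congr compGraphInduceIso.connectedComponentEquiv, coe_compl]
  exact card_connectedComponent_eq_add_of_adj_closed hcr.adj_mem

def inclEdge (Φ : GG 𝔊) (W : Finset Φ.V) : (Φ.induce W).E ↪ Φ.E :=
  ⟨fun e => e.1, Subtype.val_injective⟩

@[simp] lemma inclEdge_apply (e : (Φ.induce W).E) : Φ.inclEdge W e = e.1 := rfl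

def inclDEdge (Φ : GG 𝔊) (W : Finset Φ.V) (p : (Φ.induce W).E × Bool) : Φ.E × Bool :=
  (Φ.inclEdge W p.1, p.2)

@[simp] lemma fst_inclDEdge (p : (Φ.induce W).E × Bool) : (Φ.inclDEdge W p).1 = p.1.1 := rfl

@[simp] lemma dsrc_inclDEdge (p : (Φ.induce W).E × Bool) :
    Φ.dsrc (Φ.inclDEdge W p) = ((Φ.induce W).dsrc p).1 := by
  rcases p with ⟨e, _ | _⟩ <;> rfl

@[simp] lemma dtgt_inclDEdge (p : (Φ.induce W).E × Bool) :
    Φ.dtgt (Φ.inclDEdge W p) = ((Φ.induce W).dtgt p).1 := by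
  rcases p with ⟨e, _ | _⟩ <;> rfl

@[simp] lemma dgain_inclDEdge (p : (Φ.induce W).E × Bool) :
    Φ.dgain (Φ.inclDEdge W p) = (Φ.induce W).dgain p := by
  rcases p with ⟨e, _ | _⟩ <;> rfl

lemma isCircle_map_inclDEdge_iff {w : List ((Φ.induce W).E × Bool)} :
    Φ.IsCircle S (w.map (Φ.inclDEdge W)) ↔ (Φ.induce W).IsCircle (Φ.restrictEdges W S) w := by
  have hfst : (w.map (Φ.inclDEdge W)).map Prod.fst = (w.map Prod.fst).map (Φ.inclEdge W) := by
    simp only [List.map_map]; rfl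
  have hsrc : (w.map (Φ.inclDEdge W)).map Φ.dsrc = (w.map (Φ.induce W).dsrc).map Subtype.val := by
    simp only [List.map_map]
    exact (List.map_congr_left fun p _ => dsrc_inclDEdge p).trans
      (List.map_map (g := Subtype.val) (f := (Φ.induce W).dsrc) (l := w)).symm
  have hchain : (w.map (Φ.inclDEdge W)).IsChain (fun p q => Φ.dtgt p = Φ.dsrc q) ↔
      w.IsChain (fun p q => (Φ.induce W).dtgt p = (Φ.induce W).dsrc q) := by
    simp only [List.isChain_map, dtgt_inclDEdge, dsrc_inclDEdge]
    exact List.IsChain.iff fun _ _ => Subtype.ext_iff.symm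
  have hmem : (∀ p ∈ w.map (Φ.inclDEdge W), p.1 ∈ S) ↔ ∀ p ∈ w, p.1 ∈ Φ.restrictEdges W S := by
    simp only [List.forall_mem_map, fst_inclDEdge, mem_restrictEdges]
  constructor
  · rintro ⟨hne, hm, hch, hcl, hen, hvn⟩
    refine ⟨by simpa using hne, hmem.1 hm, hchain.1 hch, fun h => ?_,
      by rw [hfst] at hen; exact hen.of_map _, by rw [hsrc] at hvn; exact hvn.of_map _⟩
    have := hcl (by simpa using h)
    simp only [List.getLast_map, List.head_map, dtgt_inclDEdge, dsrc_inclDEdge] at this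
    exact Subtype.ext this
  · rintro ⟨hne, hm, hch, hcl, hen, hvn⟩
    refine ⟨by simpa using hne, hmem.2 hm, hchain.2 hch, fun h => ?_,
      by rw [hfst]; exact hen.map (Φ.inclEdge W).injective,
      by rw [hsrc]; exact hvn.map Subtype.val_injective⟩
    simp only [List.getLast_map, List.head_map, dtgt_inclDEdge, dsrc_inclDEdge]
    exact congrArg Subtype.val (hcl (by simpa using h))

lemma NoCross.dsrc_mem_iff (hcr : Φ.NoCross S W) {p : Φ.E × Bool} (hp : p.1 ∈ S) :
    Φ.dsrc p ∈ W ↔ Φ.dtgt p ∈ W := by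
  rcases p with ⟨e, _ | _⟩
  · exact (hcr e hp).symm
  · exact hcr e hp

lemma NoCross.endpoints_mem_of_isCircle (hcr : Φ.NoCross S W) {w : List (Φ.E × Bool)}
    (hw : Φ.IsCircle S w) (hhead : Φ.dsrc (w.head hw.ne) ∈ W) :
    ∀ p ∈ w, Φ.src p.1 ∈ W ∧ Φ.tgt p.1 ∈ W := by
  have hchain : w.IsChain fun p q => p.1 ∈ S ∧ Φ.dtgt p = Φ.dsrc q :=
    hw.chain.imp_of_mem_imp fun p _ hp _ h => ⟨hw.mem p hp, h⟩
  have hsrc : ∀ p ∈ w, Φ.dsrc p ∈ W := hchain.induction _ _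
    (fun p _ ⟨hp, hpq⟩ h => hpq ▸ (hcr.dsrc_mem_iff hp).1 h) fun _ => hhead
  rintro ⟨e, b⟩ hp
  have hsrc := hsrc _ hp
  have hcr := hcr e (hw.mem _ hp)
  cases b
  · exact ⟨hcr.2 hsrc, hsrc⟩
  · exact ⟨hsrc, hcr.1 hsrc⟩

lemma exists_map_inclDEdge_eq {w : List (Φ.E × Bool)}
    (h : ∀ p ∈ w, Φ.src p.1 ∈ W ∧ Φ.tgt p.1 ∈ W) :
    ∃ w' : List ((Φ.induce W).E × Bool), w'.map (Φ.inclDEdge W) = w := by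
  induction w with
  | nil => exact ⟨[], rfl⟩
  | cons p w ih =>
    obtain ⟨w', hw'⟩ := ih fun q hq => h q (List.mem_cons_of_mem p hq)
    exact ⟨((⟨p.1, h p List.mem_cons_self⟩ : (Φ.induce W).E), p.2) :: w',
      by rw [List.map_cons, hw']; rfl⟩

lemma NoCross.balancedComp_iff (hcr : Φ.NoCross S W) {v : Φ.V} (hv : v ∈ W) :
    Φ.BalancedComp S ((Φ.compGraph S).connectedComponentMk v) ↔
      (Φ.induce W).BalancedComp (Φ.restrictEdges W S)
        (((Φ.induce W).compGraph (Φ.restrictEdges W S)).connectedComponentMk ⟨v, hv⟩) := by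
  have hcomp : ∀ w (h : w ≠ []) (h' : w.map (Φ.inclDEdge W) ≠ []),
      (Φ.compGraph S).connectedComponentMk (Φ.dsrc ((w.map (Φ.inclDEdge W)).head h')) =
          (Φ.compGraph S).connectedComponentMk v ↔
        ((Φ.induce W).compGraph (Φ.restrictEdges W S)).connectedComponentMk
          ((Φ.induce W).dsrc (w.head h)) =
          ((Φ.induce W).compGraph (Φ.restrictEdges W S)).connectedComponentMk ⟨v, hv⟩ := by
    intro w h h'
    simp only [List.head_map, dsrc_inclDEdge]
    exact (ConnectedComponent.eq.trans (hcr.reachable_induce_iff (b := ⟨v, hv⟩)).symm).trans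
      ConnectedComponent.eq.symm
  have hgain : ∀ w : List ((Φ.induce W).E × Bool),
      (w.map (Φ.inclDEdge W)).map Φ.dgain = w.map (Φ.induce W).dgain := by
    simp [List.map_map, Function.comp_def]
  constructor
  · intro hb w hw hne hC
    rw [← hgain]
    exact hb _ (isCircle_map_inclDEdge_iff.2 hw) (by simpa using hne) ((hcomp w hne _).2 hC)
  · intro hb w hw hne hC
    have hhead : Φ.dsrc (w.head hne) ∈ W :=
      (ConnectedComponent.exact hC).symm.mem_of_adj_closed hcr.adj_mem hv
    obtain ⟨w', rfl⟩ := exists_map_inclDEdge_eq (hcr.endpoints_mem_of_isCircle hw hhead)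
    rw [hgain]
    exact hb w' (isCircle_map_inclDEdge_iff.1 hw) (by simpa using hne) ((hcomp w' _ hne).1 hC)

lemma NoCross.isBalanced_restrictEdges_iff (hcr : Φ.NoCross S W) :
    (Φ.induce W).IsBalanced (Φ.restrictEdges W S) ↔
      ∀ v ∈ W, Φ.BalancedComp S ((Φ.compGraph S).connectedComponentMk v) := by
  refine ⟨fun h v hv => (hcr.balancedComp_iff hv).2 (h _), fun h C => ?_⟩
  induction C using ConnectedComponent.ind with
  | h a => exact (hcr.balancedComp_iff a.2).1 (h a.1 a.2)

/-- `W` is a union of balanced components of `(V, S)`. -/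
def IsBalancedUnion (Φ : GG 𝔊) (S : Finset Φ.E) (W : Finset Φ.V) : Prop :=
  Φ.NoCross S W ∧ ∀ v ∈ W, Φ.BalancedComp S ((Φ.compGraph S).connectedComponentMk v)

lemma isBalancedUnion_filter_mem {T : Finset (Φ.compGraph S).ConnectedComponent}
    (hT : ∀ C ∈ T, Φ.BalancedComp S C) :
    Φ.IsBalancedUnion S (univ.filter fun v => (Φ.compGraph S).connectedComponentMk v ∈ T) := by
  refine ⟨fun e he => ?_, fun v hv => hT _ (mem_filter.1 hv).2⟩
  simp only [mem_filter, mem_univ, true_and, connectedComponentMk_src_eq_tgt he]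

lemma NoCross.filter_mem_image_connectedComponentMk (hcr : Φ.NoCross S W) :
    univ.filter (fun v => (Φ.compGraph S).connectedComponentMk v ∈
      W.image (Φ.compGraph S).connectedComponentMk) = W := by
  ext v
  simp only [mem_filter, mem_univ, true_and, mem_image, ConnectedComponent.eq]
  exact ⟨fun ⟨u, hu, huv⟩ => huv.mem_of_adj_closed hcr.adj_mem hu,
    fun hv => ⟨v, hv, Reachable.refl v⟩⟩

noncomputable def glueEdges (Φ : GG 𝔊) (W : Finset Φ.V)
    (A : Finset (Φ.induce Wᶜ).E) (B : Finset (Φ.induce W).E) : Finset Φ.E :=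
  A.map (Φ.inclEdge Wᶜ) ∪ B.map (Φ.inclEdge W)

lemma restrictEdges_glueEdges (A : Finset (Φ.induce Wᶜ).E) (B : Finset (Φ.induce W).E) :
    Φ.restrictEdges W (Φ.glueEdges W A B) = B := by
  ext e
  simp only [mem_restrictEdges, glueEdges, mem_union, mem_map, inclEdge_apply]
  constructor
  · rintro (⟨a, -, hae⟩ | ⟨b, hb, hbe⟩)
    · exact absurd e.2.1 (mem_compl.1 (hae ▸ a.2.1))
    · exact Subtype.ext hbe ▸ hb
  · exact fun he => Or.inr ⟨e, he, rfl⟩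

lemma restrictEdges_compl_glueEdges (A : Finset (Φ.induce Wᶜ).E) (B : Finset (Φ.induce W).E) :
    Φ.restrictEdges Wᶜ (Φ.glueEdges W A B) = A := by
  ext e
  simp only [mem_restrictEdges, glueEdges, mem_union, mem_map, inclEdge_apply]
  constructor
  · rintro (⟨a, ha, hae⟩ | ⟨b, -, hbe⟩)
    · exact Subtype.ext hae ▸ ha
    · exact absurd (hbe ▸ b.2.1) (mem_compl.1 e.2.1)
  · exact fun he => Or.inl ⟨e, he, rfl⟩

lemma card_glueEdges (A : Finset (Φ.induce Wᶜ).E) (B : Finset (Φ.induce W).E) :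
    #(Φ.glueEdges W A B) = #A + #B := by
  rw [glueEdges, card_union_of_disjoint, card_map, card_map]
  simp only [Finset.disjoint_left, mem_map, inclEdge_apply, not_exists, not_and]
  rintro _ ⟨a, -, rfl⟩ b - hba
  exact mem_compl.1 a.2.1 (hba ▸ b.2.1)

lemma noCross_glueEdges (A : Finset (Φ.induce Wᶜ).E) (B : Finset (Φ.induce W).E) :
    Φ.NoCross (Φ.glueEdges W A B) W := by
  intro e he
  simp only [glueEdges, mem_union, mem_map, inclEdge_apply] at he
  rcases he with ⟨a, -, rfl⟩ | ⟨b, -, rfl⟩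
  · exact iff_of_false (mem_compl.1 a.2.1) (mem_compl.1 a.2.2)
  · exact iff_of_true b.2.1 b.2.2

lemma NoCross.glueEdges_restrictEdges (hcr : Φ.NoCross S W) :
    Φ.glueEdges W (Φ.restrictEdges Wᶜ S) (Φ.restrictEdges W S) = S := by
  ext e
  simp only [glueEdges, mem_union, mem_map, mem_restrictEdges, inclEdge_apply]
  constructor
  · rintro (⟨a, ha, rfl⟩ | ⟨b, hb, rfl⟩) <;> assumption
  · intro he
    by_cases hs : Φ.src e ∈ W
    · exact Or.inr ⟨⟨e, hs, (hcr e he).1 hs⟩, he, rfl⟩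
    · exact Or.inl ⟨⟨e, mem_compl.2 hs, mem_compl.2 (mt (hcr e he).2 hs)⟩, he, rfl⟩

lemma underlyingChrom_mul_chiStar (Φ : GG 𝔊) (W : Finset Φ.V) (q z : ℤ) :
    (Φ.induce Wᶜ).underlyingChrom z * (Φ.induce W).chiStar (q - z) =
      ∑ S ∈ univ.filter (Φ.IsBalancedUnion · W),
        (-1) ^ #S * ((q - z) ^ (Φ.induce W).c (Φ.restrictEdges W S) *
          z ^ (Φ.induce Wᶜ).c (Φ.restrictEdges Wᶜ S)) := by
  rw [chiStar_eq_sum_isBalanced, underlyingChrom, sum_mul_sum, ← sum_product']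
  refine sum_nbij' (fun p => Φ.glueEdges W p.1 p.2)
    (fun S => (Φ.restrictEdges Wᶜ S, Φ.restrictEdges W S)) ?_ ?_ ?_ ?_ ?_
  · rintro ⟨A, B⟩ hB
    simp only [mem_product, mem_filter, mem_univ, true_and] at hB ⊢
    have hcr := noCross_glueEdges A B
    exact ⟨hcr, hcr.isBalanced_restrictEdges_iff.1 (by rwa [restrictEdges_glueEdges])⟩
  · intro S hS
    simp only [mem_product, mem_filter, mem_univ, true_and] at hS ⊢
    exact hS.1.isBalanced_restrictEdges_iff.2 hS.2
  · rintro ⟨A, B⟩ -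
    rw [restrictEdges_compl_glueEdges, restrictEdges_glueEdges]
  · intro S hS
    exact (mem_filter.1 hS).2.1.glueEdges_restrictEdges
  · rintro ⟨A, B⟩ -
    rw [restrictEdges_glueEdges, restrictEdges_compl_glueEdges, card_glueEdges, pow_add]
    ring

lemma sum_isBalancedUnion (Φ : GG 𝔊) (S : Finset Φ.E) (q z : ℤ) :
    ∑ W ∈ univ.filter (Φ.IsBalancedUnion S),
        (q - z) ^ (Φ.induce W).c (Φ.restrictEdges W S) *
          z ^ (Φ.induce Wᶜ).c (Φ.restrictEdges Wᶜ S) =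
      q ^ Φ.b S * z ^ (Φ.c S - Φ.b S) := by
  set mk := (Φ.compGraph S).connectedComponentMk
  set 𝔅 := univ.filter (Φ.BalancedComp S)
  have h𝔅 : #𝔅 ≤ Φ.c S := b_eq_card_filter S ▸ b_le_c S
  calc _ = ∑ T ∈ 𝔅.powerset, (q - z) ^ #T * z ^ (Φ.c S - #T) := by
        refine sum_nbij' (fun W => W.image mk) (fun T => univ.filter (mk · ∈ T))
          ?_ ?_ ?_ ?_ ?_
        · intro W hW
          simp only [mem_filter, mem_univ, true_and, mem_powerset, subset_iff,
            mem_image] at hW ⊢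
          rintro _ ⟨v, hv, rfl⟩
          exact mem_filter.2 ⟨mem_univ _, hW.2 v hv⟩
        · intro T hT
          exact mem_filter.2 ⟨mem_univ _,
            isBalancedUnion_filter_mem fun C hC => (mem_filter.1 (mem_powerset.1 hT hC)).2⟩
        · intro W hW
          exact (mem_filter.1 hW).2.1.filter_mem_image_connectedComponentMk
        · intro T _
          ext C
          induction C using ConnectedComponent.ind with
          | h v =>
            simp only [mem_image, mem_filter, mem_univ, true_and]
            exact ⟨fun ⟨u, hu, huv⟩ => huv ▸ hu, fun hv => ⟨v, hv, rfl⟩⟩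
        · intro W hW
          have hcr := (mem_filter.1 hW).2.1
          rw [← hcr.c_induce_eq_card_image, hcr.c_eq_add, Nat.add_sub_cancel_left]
    _ = q ^ Φ.b S * z ^ (Φ.c S - Φ.b S) := by
        rw [sum_powerset_pow_mul_pow_sub 𝔅 h𝔅, sub_add_cancel, b_eq_card_filter]

end GG

open Classical in
theorem stmt_19_general (Φ : GG 𝔊) (q z : ℤ) :
    Φ.chiTotal q z =
      ∑ W : Finset Φ.V, (Φ.induce Wᶜ).underlyingChrom z * (Φ.induce W).chiStar (q - z) := by
  calc Φ.chiTotal q z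
      = ∑ S, ∑ W ∈ univ.filter (Φ.IsBalancedUnion S),
          (-1) ^ #S * ((q - z) ^ (Φ.induce W).c (Φ.restrictEdges W S) *
            z ^ (Φ.induce Wᶜ).c (Φ.restrictEdges Wᶜ S)) := by
        refine sum_congr rfl fun S _ => ?_
        rw [← mul_sum, GG.sum_isBalancedUnion, mul_assoc]
    _ = ∑ W, ∑ S ∈ univ.filter (Φ.IsBalancedUnion · W),
          (-1) ^ #S * ((q - z) ^ (Φ.induce W).c (Φ.restrictEdges W S) *
            z ^ (Φ.induce Wᶜ).c (Φ.restrictEdges Wᶜ S)) :=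
        sum_comm' fun S W => by simp
    _ = _ := sum_congr rfl fun W _ => (GG.underlyingChrom_mul_chiStar Φ W q z).symm

open Classical in
/-- Proposition: for a gain graph `Φ` with finite gain group and underlying graph `Γ`,
`χ̃_Φ(q,z) = ∑_{W ⊆ V} χ_{Γ|Wᶜ}(z) · χ*_{Φ|W}(q − z)`. -/
theorem stmt_19 [Fintype 𝔊] (Φ : GG 𝔊) (q z : ℤ) :
    Φ.chiTotal q z =
      ∑ W : Finset Φ.V, (Φ.induce Wᶜ).underlyingChrom z * (Φ.induce W).chiStar (q - z) :=
  stmt_19_general Φ q z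
end
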